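/- arXiv:1504.06602 — 5 statements merged into one kernel-verified Lean document; each statement's English description precedes it below -/
import Mathlib

section
/- Let T = (V,E) be a finite tree and let b^i (i ∈ {1,…,ℓ}) be nonnegative cut values satisfying the sub-additive property. Then LP^L(T) = LP^U(T), and moreover both optimum values equal Σ_{e∈E} Σ_{i=1}^ℓ b^i(C_e). -/
open Finset
open scoped Classical

variable {V : Type} [Fintype V] [DecidableEq V]

/-- A cut of a graph on vertex set `V`: a nonempty proper subset of the vertices. -/
def IsCut (C : Finset V) : Prop := C.Nonempty ∧ C ≠ Finset.univ

/-- The unordered pair `e` crosses the cut `C`: exactly one of its endpoints lies in `C`. -/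
def Crosses (C : Finset V) (e : Sym2 V) : Prop :=
  ∃ u v, e = s(u, v) ∧ u ∈ C ∧ v ∉ C

/-- `δ(C)`: the edges of `G` with exactly one endpoint in `C`. -/
noncomputable def cutEdges (G : SimpleGraph V) (C : Finset V) : Finset (Sym2 V) :=
  G.edgeFinset.filter (Crosses C)

/-- The optimum value of `LP^L(G)`: minimize `∑_{e∈E} x_e` subject to
`∑_{e∈δ(C)} x_e ≥ ∑_i b^i(C)` for every cut `C`, `x ≥ 0`. -/
noncomputable def LPL (G : SimpleGraph V) (ℓ : ℕ) (b : Fin ℓ → Finset V → ℝ) : ℝ :=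
  sInf { y | ∃ x : Sym2 V → ℝ, (∀ e, 0 ≤ x e) ∧
    (∀ C : Finset V, IsCut C → ∑ i, b i C ≤ ∑ e ∈ cutEdges G C, x e) ∧
    y = ∑ e ∈ G.edgeFinset, x e }

/-- The optimum value of `LP^U(G)`: minimize `∑_i ∑_{e∈E} x_{i,e}` subject to
`∑_{e∈δ(C)} x_{i,e} ≥ b^i(C)` for every cut `C` and every `i`, `x ≥ 0`. -/
noncomputable def LPU (G : SimpleGraph V) (ℓ : ℕ) (b : Fin ℓ → Finset V → ℝ) : ℝ :=
  sInf { y | ∃ x : Fin ℓ → Sym2 V → ℝ, (∀ i e, 0 ≤ x i e) ∧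
    (∀ (i : Fin ℓ) (C : Finset V), IsCut C → b i C ≤ ∑ e ∈ cutEdges G C, x i e) ∧
    y = ∑ i, ∑ e ∈ G.edgeFinset, x i e }

/-- The cut values `b` satisfy the sub-additive property. -/
def SubAdd (ℓ : ℕ) (b : Fin ℓ → Finset V → ℝ) : Prop :=
  ∀ (i : Fin ℓ) (C₁ C₂ : Finset V), IsCut C₁ → IsCut C₂ → IsCut (C₁ ∪ C₂) →
    b i (C₁ ∪ C₂) ≤ b i C₁ + b i C₂

/-- The cut values `b` are nonnegative on cuts. -/
def CutNonneg (ℓ : ℕ) (b : Fin ℓ → Finset V → ℝ) : Prop :=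
  ∀ (i : Fin ℓ) (C : Finset V), IsCut C → 0 ≤ b i C

/-- For an edge `e` of a tree `G`, `compCut G e` is the vertex set of one of the two connected
components of `G` with `e` removed (the one containing one fixed endpoint of `e`). -/
noncomputable def compCut (G : SimpleGraph V) (e : Sym2 V) : Finset V :=
  Finset.univ.filter fun w => (G.deleteEdges {e}).Reachable (Quot.out e).1 w

/-!
For an edge `e` of the tree, `δ(C_e) = {e}`, so the constraint of either LP at `C_e` forces every
feasible solution to spend at least `∑ᵢ bⁱ(C_e)` on `e`. Conversely `x_e = ∑ᵢ bⁱ(C_e)`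
(resp. `x_{i,e} = bⁱ(C_e)`) is feasible, because every cut satisfies
`bⁱ(C) ≤ ∑_{e ∈ δ(C)} bⁱ(C_e)`. The latter is proved by induction on `|δ(C)|`: among the sides of
the edges of `δ(C)` take a smallest one, `S`, of an edge `e`. Any other edge of `δ(C)` inside `S`
would cut off a strictly smaller side, so `S` lies on one side of `C`; by symmetry `S ⊆ C`, and
sub-additivity applied to `C = S ∪ (C \ S)`, where `δ(C \ S) = δ(C) \ {e}`, completes the step.
-/

theorem SimpleGraph.Reachable.iff_of_forall_adj {α : Type*} {H : SimpleGraph α} {x w : α}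
    (hxw : H.Reachable x w) {P : α → Prop}
    (hP : ∀ a b, H.Reachable x a → H.Adj a b → (P a ↔ P b)) : P x ↔ P w := by
  classical
  obtain ⟨p⟩ := hxw
  by_contra hw
  obtain ⟨d, hd, hfst, hsnd⟩ :=
    p.exists_boundary_dart {y | P y ↔ P x} Iff.rfl (by simpa [iff_comm] using hw)
  have hreach : H.Reachable x d.fst := ⟨p.takeUntil _ (p.dart_fst_mem_support_of_mem_darts hd)⟩
  exact hsnd ((hP _ _ hreach d.adj).symm.trans hfst)

section Cuts

omit [Fintype V] [DecidableEq V] in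
theorem crosses_mk_iff {C : Finset V} {x y : V} : Crosses C s(x, y) ↔ ¬(x ∈ C ↔ y ∈ C) := by
  constructor
  · rintro ⟨u, v, h, hu, hv⟩
    rcases Sym2.eq_iff.1 h with ⟨rfl, rfl⟩ | ⟨rfl, rfl⟩ <;> tauto
  · intro h
    by_cases hx : x ∈ C
    · exact ⟨x, y, rfl, hx, by tauto⟩
    · exact ⟨y, x, Sym2.eq_swap, by tauto, hx⟩

omit [Fintype V] in
theorem crosses_sdiff_iff {C S : Finset V} (hSC : S ⊆ C) (g : Sym2 V) :
    Crosses (C \ S) g ↔ ¬(Crosses C g ↔ Crosses S g) := by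
  induction g using Sym2.ind with
  | h x y =>
    have := @hSC x
    have := @hSC y
    simp only [crosses_mk_iff, mem_sdiff]
    tauto

theorem isCut_compl {C : Finset V} (hC : IsCut C) : IsCut Cᶜ :=
  ⟨nonempty_iff_ne_empty.2 (by simpa using hC.2), (compl_ne_univ_iff_nonempty C).2 hC.1⟩

variable {G : SimpleGraph V}

theorem cutEdges_compl (C : Finset V) : cutEdges G Cᶜ = cutEdges G C := by
  refine filter_congr fun g _ => ?_
  induction g using Sym2.ind with
  | h x y => simp only [crosses_mk_iff, mem_compl]; tauto

theorem cutEdges_sdiff {C S : Finset V} {e : Sym2 V} (hSC : S ⊆ C) (hS : cutEdges G S = {e})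
    (he : e ∈ cutEdges G C) : cutEdges G (C \ S) = (cutEdges G C).erase e := by
  ext g
  have hg : g ∈ cutEdges G S ↔ g ∈ ({e} : Finset _) := by rw [hS]
  simp only [cutEdges, mem_filter, mem_erase, mem_singleton] at hg he ⊢
  rw [crosses_sdiff_iff hSC]
  by_cases hge : g = e
  · subst hge
    tauto
  · tauto

theorem cutEdges_nonempty (hG : G.Connected) {C : Finset V} (hC : IsCut C) :
    (cutEdges G C).Nonempty := by
  obtain ⟨⟨x, hx⟩, hCne⟩ := hC
  obtain ⟨y, hy⟩ := not_forall.1 (mt eq_univ_iff_forall.2 hCne)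
  by_contra hempty
  refine hy (((hG.preconnected x y).iff_of_forall_adj (P := (· ∈ C)) ?_).1 hx)
  intro a b _ hab
  by_contra hcross
  exact hempty ⟨s(a, b), mem_filter.2 ⟨G.mem_edgeFinset.2 hab, crosses_mk_iff.2 hcross⟩⟩

end Cuts

section Sides

variable {G : SimpleGraph V} {e : Sym2 V} {p u v w : V}

noncomputable def side (G : SimpleGraph V) (e : Sym2 V) (p : V) : Finset V :=
  univ.filter fun w => (G.deleteEdges {e}).Reachable p w

theorem mem_side : w ∈ side G e p ↔ (G.deleteEdges {e}).Reachable p w := by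
  simp [side]

theorem self_mem_side : p ∈ side G e p :=
  mem_side.2 .rfl

theorem mem_side_iff_of_adj {a b : V} (hab : (G.deleteEdges {e}).Adj a b) :
    a ∈ side G e p ↔ b ∈ side G e p := by
  simp only [mem_side]
  exact ⟨fun h => h.trans hab.reachable, fun h => h.trans hab.symm.reachable⟩

theorem notMem_side (hG : G.IsAcyclic) (huv : G.Adj u v) : v ∉ side G s(u, v) u :=
  fun h => SimpleGraph.isAcyclic_iff_forall_adj_isBridge.1 hG huv (mem_side.1 h)

theorem mem_side_or_mem_side (hG : G.Connected) (u v w : V) :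
    w ∈ side G s(u, v) u ∨ w ∈ side G s(u, v) v := by
  obtain ⟨q⟩ := hG.preconnected u w
  by_contra hw
  obtain ⟨d, -, hfst, hsnd⟩ := q.exists_boundary_dart
    {x | x ∈ side G s(u, v) u ∨ x ∈ side G s(u, v) v} (.inl self_mem_side) hw
  by_cases hd : s(d.fst, d.snd) = s(u, v)
  · rcases Sym2.eq_iff.1 hd with ⟨-, h⟩ | ⟨-, h⟩ <;> rw [h] at hsnd
    · exact hsnd (.inr self_mem_side)
    · exact hsnd (.inl self_mem_side)
  · have hadj : (G.deleteEdges {s(u, v)}).Adj d.fst d.snd :=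
      SimpleGraph.deleteEdges_adj.2 ⟨d.adj, by simpa using hd⟩
    exact hsnd (by simpa [mem_side_iff_of_adj hadj] using hfst)

theorem side_compl (hG : G.IsTree) (huv : G.Adj u v) :
    side G s(u, v) v = (side G s(u, v) u)ᶜ := by
  ext w
  rw [mem_compl]
  refine ⟨fun hv hu => ?_, (mem_side_or_mem_side hG.connected u v w).resolve_left⟩
  exact notMem_side hG.isAcyclic huv (mem_side.2 ((mem_side.1 hu).trans (mem_side.1 hv).symm))

theorem isCut_side (hG : G.IsAcyclic) (huv : G.Adj u v) : IsCut (side G s(u, v) u) :=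
  ⟨⟨u, self_mem_side⟩, fun h => notMem_side hG huv (h ▸ mem_univ v)⟩

theorem cutEdges_side (hG : G.IsAcyclic) (huv : G.Adj u v) :
    cutEdges G (side G s(u, v) u) = {s(u, v)} := by
  ext g
  induction g using Sym2.ind with
  | h x y =>
    simp only [cutEdges, mem_filter, mem_singleton, SimpleGraph.mem_edgeFinset,
      SimpleGraph.mem_edgeSet, crosses_mk_iff]
    constructor
    · rintro ⟨hxy, hcross⟩
      by_contra hne
      exact hcross (mem_side_iff_of_adj (SimpleGraph.deleteEdges_adj.2 ⟨hxy, by simpa using hne⟩))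
    · intro h
      have := notMem_side hG huv
      rcases Sym2.eq_iff.1 h with ⟨rfl, rfl⟩ | ⟨rfl, rfl⟩
      · exact ⟨huv, by simp [self_mem_side, this]⟩
      · exact ⟨huv.symm, by simp [self_mem_side, this]⟩

theorem side_ssubset_side (hG : G.IsTree) (huv : G.Adj u v) {a b : V} (hab : G.Adj a b)
    (ha : a ∈ side G s(u, v) u) (hb : b ∈ side G s(u, v) u) (hv : v ∈ side G s(a, b) a) :
    side G s(a, b) b ⊂ side G s(u, v) u := by
  have hsub : side G s(u, v) v ⊆ side G s(a, b) a := by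
    intro z hz
    refine ((mem_side.1 hz).iff_of_forall_adj (P := (· ∈ side G s(a, b) a)) ?_).1 hv
    intro c d hc hcd
    have hc' : c ∉ side G s(u, v) u := by
      rw [← mem_compl, ← side_compl hG huv]
      exact mem_side.2 hc
    have hne : s(c, d) ≠ s(a, b) := by
      intro h
      rcases Sym2.eq_iff.1 h with ⟨rfl, -⟩ | ⟨rfl, -⟩ <;> contradiction
    exact mem_side_iff_of_adj
      (SimpleGraph.deleteEdges_adj.2 ⟨(SimpleGraph.deleteEdges_adj.1 hcd).1, by simpa using hne⟩)
  have hle : side G s(a, b) b ⊆ side G s(u, v) u := by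
    rw [side_compl hG hab, ← compl_compl (side G s(u, v) u), ← side_compl hG huv]
    exact compl_subset_compl.2 hsub
  refine (ssubset_iff_of_subset hle).2 ⟨a, ha, ?_⟩
  rw [Sym2.eq_swap]
  exact notMem_side hG.isAcyclic hab.symm

theorem compCut_mk (G : SimpleGraph V) (u v : V) :
    compCut G s(u, v) = side G s(u, v) u ∨ compCut G s(u, v) = side G s(u, v) v := by
  have h : s((Quot.out s(u, v)).1, (Quot.out s(u, v)).2) = s(u, v) := Quot.out_eq _
  unfold compCut side
  rcases Sym2.eq_iff.1 h with ⟨h1, -⟩ | ⟨h1, -⟩ <;> rw [h1] <;> simp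

theorem isCut_compCut (hG : G.IsAcyclic) (he : e ∈ G.edgeFinset) : IsCut (compCut G e) := by
  induction e using Sym2.ind with
  | h x y =>
    rw [SimpleGraph.mem_edgeFinset, SimpleGraph.mem_edgeSet] at he
    rcases compCut_mk G x y with h | h <;> rw [h]
    · exact isCut_side hG he
    · rw [Sym2.eq_swap]
      exact isCut_side hG he.symm

theorem cutEdges_compCut (hG : G.IsAcyclic) (he : e ∈ G.edgeFinset) :
    cutEdges G (compCut G e) = {e} := by
  induction e using Sym2.ind with
  | h x y =>
    rw [SimpleGraph.mem_edgeFinset, SimpleGraph.mem_edgeSet] at he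
    rcases compCut_mk G x y with h | h <;> rw [h]
    · exact cutEdges_side hG he
    · rw [Sym2.eq_swap]
      exact cutEdges_side hG he.symm

theorem apply_compCut_eq_apply_side (hG : G.IsTree) (huv : G.Adj u v) {β : Finset V → ℝ}
    (hsymm : ∀ C, IsCut C → β C = β Cᶜ) : β (compCut G s(u, v)) = β (side G s(u, v) u) := by
  rcases compCut_mk G u v with h | h <;> rw [h]
  rw [side_compl hG huv, ← hsymm _ (isCut_side hG.isAcyclic huv)]

end Sides

section KeyInequality

variable {G : SimpleGraph V}

theorem exists_side_subset (hG : G.IsTree) {C : Finset V} (hC : IsCut C) :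
    ∃ u v, G.Adj u v ∧ s(u, v) ∈ cutEdges G C ∧
      (side G s(u, v) u ⊆ C ∨ side G s(u, v) u ⊆ Cᶜ) := by
  set P := univ.filter fun d : V × V => G.Adj d.1 d.2 ∧ s(d.1, d.2) ∈ cutEdges G C
  have hP : P.Nonempty := by
    obtain ⟨e, he⟩ := cutEdges_nonempty hG.connected hC
    induction e using Sym2.ind with
    | h x y =>
      have hxy : G.Adj x y := G.mem_edgeSet.1 (G.mem_edgeFinset.1 (mem_filter.1 he).1)
      exact ⟨(x, y), by simpa [P] using ⟨hxy, he⟩⟩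
  obtain ⟨⟨u, v⟩, huvP, hmin⟩ := exists_min_image P (fun d => #(side G s(d.1, d.2) d.1)) hP
  obtain ⟨huv, he⟩ : G.Adj u v ∧ s(u, v) ∈ cutEdges G C := by simpa [P] using huvP
  set S := side G s(u, v) u
  have hmono_of_mem_side : ∀ a b, G.Adj a b → a ∈ S → b ∈ S → v ∈ side G s(a, b) a →
      (a ∈ C ↔ b ∈ C) := by
    intro a b hab ha hb hv
    by_contra hcross
    have hba : (b, a) ∈ P := by
      simpa [P, cutEdges, Sym2.eq_swap, crosses_mk_iff, hab.symm, iff_comm] using hcross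
    have hlt := card_lt_card (side_ssubset_side hG huv hab ha hb hv)
    exact (hmin _ hba).not_gt (by simpa [Sym2.eq_swap] using hlt)
  have hmono : ∀ a b, G.Adj a b → a ∈ S → b ∈ S → (a ∈ C ↔ b ∈ C) := by
    intro a b hab ha hb
    rcases mem_side_or_mem_side hG.connected a b v with hv | hv
    · exact hmono_of_mem_side a b hab ha hb hv
    · rw [Sym2.eq_swap] at hv
      exact (hmono_of_mem_side b a hab.symm hb ha hv).symm
  have hS : ∀ w ∈ S, (u ∈ C ↔ w ∈ C) := by
    intro w hw
    refine (mem_side.1 hw).iff_of_forall_adj fun a b ha hab => ?_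
    have ha' : a ∈ S := mem_side.2 ha
    exact hmono a b (SimpleGraph.deleteEdges_adj.1 hab).1 ha' ((mem_side_iff_of_adj hab).1 ha')
  refine ⟨u, v, huv, he, ?_⟩
  by_cases hu : u ∈ C
  · exact .inl fun w hw => (hS w hw).1 hu
  · exact .inr fun w hw => mem_compl.2 fun hw' => hu ((hS w hw).2 hw')

theorem le_sum_cutEdges (hG : G.IsTree) {β : Finset V → ℝ} (hsymm : ∀ C, IsCut C → β C = β Cᶜ)
    (hsub : ∀ C₁ C₂, IsCut C₁ → IsCut C₂ → IsCut (C₁ ∪ C₂) → β (C₁ ∪ C₂) ≤ β C₁ + β C₂)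
    {C : Finset V} (hC : IsCut C) : β C ≤ ∑ e ∈ cutEdges G C, β (compCut G e) := by
  induction hn : #(cutEdges G C) using Nat.strong_induction_on generalizing C with
  | _ n ih =>
    obtain ⟨u, v, huv, he, hside⟩ := exists_side_subset hG hC
    obtain ⟨D, hD, hδ, hβ, hSD⟩ : ∃ D, IsCut D ∧ cutEdges G D = cutEdges G C ∧ β D = β C ∧
        side G s(u, v) u ⊆ D := by
      rcases hside with h | h
      · exact ⟨C, hC, rfl, rfl, h⟩
      · exact ⟨Cᶜ, isCut_compl hC, cutEdges_compl C, (hsymm C hC).symm, h⟩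
    rw [← hδ] at he hn
    rw [← hβ, ← hδ]
    set S := side G s(u, v) u
    have hβS := apply_compCut_eq_apply_side hG huv hsymm
    have hδS := cutEdges_side hG.isAcyclic huv
    by_cases hSD' : S = D
    · rw [← hSD', hδS, sum_singleton, hβS]
    have hD' : IsCut (D \ S) :=
      ⟨sdiff_nonempty.2 fun h => hSD' (hSD.antisymm h), ne_top_of_le_ne_top hD.2 sdiff_subset⟩
    have hunion : S ∪ (D \ S) = D := union_sdiff_of_subset hSD
    have hδD' : cutEdges G (D \ S) = (cutEdges G D).erase s(u, v) :=
      cutEdges_sdiff hSD hδS he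
    calc β D = β (S ∪ (D \ S)) := by rw [hunion]
      _ ≤ β S + β (D \ S) := hsub _ _ (isCut_side hG.isAcyclic huv) hD' (by rwa [hunion])
      _ ≤ β (compCut G s(u, v)) + ∑ e ∈ (cutEdges G D).erase s(u, v), β (compCut G e) := by
        rw [hβS, ← hδD']
        exact add_le_add le_rfl (ih _ (hn ▸ hδD' ▸ card_erase_lt_of_mem he) hD' rfl)
      _ = ∑ e ∈ cutEdges G D, β (compCut G e) :=
        add_sum_erase _ (fun e => β (compCut G e)) he

end KeyInequality

section LinearPrograms

variable {G : SimpleGraph V} {ℓ : ℕ} {b : Fin ℓ → Finset V → ℝ}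

theorem LPL_eq_sum (hG : G.IsAcyclic) (hb : CutNonneg ℓ b)
    (hkey : ∀ i C, IsCut C → b i C ≤ ∑ e ∈ cutEdges G C, b i (compCut G e)) :
    LPL G ℓ b = ∑ e ∈ G.edgeFinset, ∑ i, b i (compCut G e) := by
  refine IsLeast.csInf_eq ⟨⟨fun e => if e ∈ G.edgeFinset then ∑ i, b i (compCut G e) else 0,
    fun e => ?_, fun C hC => ?_, (sum_congr rfl fun e he => if_pos he).symm⟩, ?_⟩
  · dsimp only
    split_ifs with he
    exacts [sum_nonneg fun i _ => hb i _ (isCut_compCut hG he), le_rfl]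
  · calc ∑ i, b i C ≤ ∑ i, ∑ e ∈ cutEdges G C, b i (compCut G e) :=
          sum_le_sum fun i _ => hkey i C hC
      _ = _ := by
          rw [sum_comm]
          exact sum_congr rfl fun e he => (if_pos (filter_subset _ _ he)).symm
  · rintro y ⟨x, -, hx, rfl⟩
    refine sum_le_sum fun e he => ?_
    simpa [cutEdges_compCut hG he] using hx _ (isCut_compCut hG he)

theorem LPU_eq_sum (hG : G.IsAcyclic) (hb : CutNonneg ℓ b)
    (hkey : ∀ i C, IsCut C → b i C ≤ ∑ e ∈ cutEdges G C, b i (compCut G e)) :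
    LPU G ℓ b = ∑ e ∈ G.edgeFinset, ∑ i, b i (compCut G e) := by
  refine IsLeast.csInf_eq ⟨⟨fun i e => if e ∈ G.edgeFinset then b i (compCut G e) else 0,
    fun i e => ?_, fun i C hC => ?_, ?_⟩, ?_⟩
  · dsimp only
    split_ifs with he
    exacts [hb i _ (isCut_compCut hG he), le_rfl]
  · refine (hkey i C hC).trans_eq (sum_congr rfl fun e he => ?_)
    exact (if_pos (filter_subset _ _ he)).symm
  · rw [sum_comm]
    exact sum_congr rfl fun i _ => (sum_congr rfl fun e he => if_pos he).symm
  · rintro y ⟨x, -, hx, rfl⟩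
    rw [sum_comm]
    refine sum_le_sum fun i _ => sum_le_sum fun e he => ?_
    simpa [cutEdges_compCut hG he] using hx i _ (isCut_compCut hG he)

end LinearPrograms

theorem statement3_general (V : Type) [Fintype V] [DecidableEq V] (G : SimpleGraph V)
    (htree : G.IsTree) (ℓ : ℕ) (b : Fin ℓ → Finset V → ℝ)
    (hb : CutNonneg ℓ b)
    (hsymm : ∀ (i : Fin ℓ) (C : Finset V), IsCut C → b i C = b i Cᶜ)
    (hsub : SubAdd ℓ b) :
    LPL G ℓ b = LPU G ℓ b ∧
    LPL G ℓ b = ∑ e ∈ G.edgeFinset, ∑ i, b i (compCut G e) := by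
  have hkey (i : Fin ℓ) (C : Finset V) (hC : IsCut C) :
      b i C ≤ ∑ e ∈ cutEdges G C, b i (compCut G e) :=
    le_sum_cutEdges htree (hsymm i) (hsub i) hC
  rw [LPL_eq_sum htree.isAcyclic hb hkey, LPU_eq_sum htree.isAcyclic hb hkey]
  exact ⟨rfl, rfl⟩

/-- For a finite tree `T` and nonnegative, symmetric, sub-additive cut values,
`LP^L(T) = LP^U(T)`, and both optimum values equal `∑_{e∈E} ∑_i b^i(C_e)`. -/
theorem statement3 (V : Type) [Fintype V] [DecidableEq V] (G : SimpleGraph V)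
    (htree : G.IsTree) (ℓ : ℕ) (hℓ : 1 ≤ ℓ) (b : Fin ℓ → Finset V → ℝ)
    (hb : CutNonneg ℓ b)
    (hsymm : ∀ (i : Fin ℓ) (C : Finset V), IsCut C → b i C = b i Cᶜ)
    (hsub : SubAdd ℓ b) :
    LPL G ℓ b = LPU G ℓ b ∧
    LPL G ℓ b = ∑ e ∈ G.edgeFinset, ∑ i, b i (compCut G e) :=
  statement3_general V G htree ℓ b hb hsymm hsub
end

section
/- Let G = (V,E) be a finite connected simple graph, let T be a spanning subtree of G, and let (x_e)_{e∈E} be a feasible solution of LP^L(G) for nonnegative cut values b^i (i ∈ {1,…,ℓ}). For each edge e' of T define x'_{e'} = Σ_{e={u,v}∈E : e' ∈ P_{u,v}} x_e, where P_{u,v} is the unique path in T connecting u and v. Then (x'_{e'})_{e'∈E(T)} is a feasible solution of LP^L(T) (with the same cut values b^i), and Σ_{e'∈E(T)} x'_{e'} = Σ_{e={u,v}∈E} d_T(u,v) · x_e. -/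
open Finset
open scoped Classical

variable {V : Type} [Fintype V] [DecidableEq V]

/-- `e` lies on the (in a tree, unique) path `P_{u,v}` connecting `u` and `v` in `T`. -/
def OnTreePath (T : SimpleGraph V) (u v : V) (e : Sym2 V) : Prop :=
  ∃ p : T.Walk u v, p.IsPath ∧ e ∈ p.edges

/-- The pushed-forward solution: `x'_{e'} = ∑_{e = {u,v} ∈ E(G) : e' ∈ P_{u,v}} x_e`. -/
noncomputable def pushed (G T : SimpleGraph V) (x : Sym2 V → ℝ) (e' : Sym2 V) : ℝ :=
  ∑ e ∈ G.edgeFinset.filter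
    (fun e => OnTreePath T (Quot.out e).1 (Quot.out e).2 e'), x e

/-!
Swapping the order of summation, `∑_{e' ∈ S} x'_{e'}` charges each edge `e = {u,v}` of `G` with
`x_e` times the number of edges of `S` on the tree path `P_{u,v}`. For `S = E(T)` that number
is `|P_{u,v}| = d_T(u,v)`. For `S = δ_T(C)` it is at least one whenever `e ∈ δ_G(C)`, because a
path from `C` to its complement leaves `C` along some edge; so the cut constraints transfer.
-/

open SimpleGraph

section OnTreePath

variable {T : SimpleGraph V} {u v : V} {e : Sym2 V}

omit [Fintype V] [DecidableEq V] in
lemma OnTreePath.symm (h : OnTreePath T u v e) : OnTreePath T v u e := by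
  obtain ⟨p, hp, he⟩ := h
  exact ⟨p.reverse, hp.reverse, by simpa [Walk.edges_reverse] using he⟩

omit [DecidableEq V] in
lemma OnTreePath.mem_edgeFinset (h : OnTreePath T u v e) : e ∈ T.edgeFinset := by
  obtain ⟨p, -, he⟩ := h
  exact SimpleGraph.mem_edgeFinset.mpr (p.edges_subset_edgeSet he)

omit [Fintype V] [DecidableEq V] in
lemma SimpleGraph.IsAcyclic.onTreePath_iff_mem_edges (hT : T.IsAcyclic) {p : T.Walk u v}
    (hp : p.IsPath) :
    OnTreePath T u v e ↔ e ∈ p.edges := by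
  refine ⟨?_, fun he => ⟨p, hp, he⟩⟩
  rintro ⟨q, hq, he⟩
  have hqp : q = p := congrArg Subtype.val ((hT.subsingleton_path u v).elim ⟨q, hq⟩ ⟨p, hp⟩)
  rwa [hqp] at he

omit [Fintype V] [DecidableEq V] in
lemma SimpleGraph.Preconnected.exists_crosses_onTreePath (hT : T.Preconnected) {C : Finset V}
    (hu : u ∈ C) (hv : v ∉ C) : ∃ e', Crosses C e' ∧ OnTreePath T u v e' := by
  obtain ⟨p, hp⟩ := (hT u v).exists_isPath
  obtain ⟨d, hd, hdC, hdC'⟩ := p.exists_boundary_dart C hu hv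
  exact ⟨d.edge, ⟨d.fst, d.snd, rfl, hdC, hdC'⟩, p, hp, List.mem_map_of_mem hd⟩

omit [DecidableEq V] in
lemma SimpleGraph.Preconnected.exists_mem_cutEdges_onTreePath (hT : T.Preconnected)
    {C : Finset V} (he : Crosses C e) :
    ∃ e' ∈ cutEdges T C, OnTreePath T (Quot.out e).1 (Quot.out e).2 e' := by
  obtain ⟨u, v, rfl, hu, hv⟩ := he
  have hout : s((Quot.out s(u, v)).1, (Quot.out s(u, v)).2) = s(u, v) := Quot.out_eq _
  obtain ⟨e', hcross, hpath⟩ := hT.exists_crosses_onTreePath hu hv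
  refine ⟨e', mem_filter.mpr ⟨hpath.mem_edgeFinset, hcross⟩, ?_⟩
  rcases Sym2.eq_iff.mp hout with ⟨h₁, h₂⟩ | ⟨h₁, h₂⟩
  · rwa [h₁, h₂]
  · rw [h₁, h₂]
    exact hpath.symm

lemma SimpleGraph.IsAcyclic.card_filter_onTreePath (hT : T.IsAcyclic) (u v : V) :
    #(T.edgeFinset.filter (OnTreePath T u v)) = T.dist u v := by
  by_cases huv : T.Reachable u v
  · obtain ⟨p, hp, hlen⟩ := huv.exists_path_of_dist
    have hfilter : T.edgeFinset.filter (OnTreePath T u v) = p.edges.toFinset := by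
      ext e'
      rw [mem_filter, List.mem_toFinset, hT.onTreePath_iff_mem_edges hp]
      exact ⟨And.right, fun he => ⟨mem_edgeFinset.mpr (p.edges_subset_edgeSet he), he⟩⟩
    rw [hfilter, List.toFinset_card_of_nodup hp.isTrail.edges_nodup, Walk.length_edges, hlen]
  · rw [dist_eq_zero_of_not_reachable huv, card_eq_zero, filter_eq_empty_iff]
    rintro e' - ⟨p, -, -⟩
    exact huv ⟨p⟩

end OnTreePath

section Pushed

variable {G T : SimpleGraph V} {x : Sym2 V → ℝ}

omit [DecidableEq V] in
lemma pushed_nonneg (hx0 : ∀ e, 0 ≤ x e) (e' : Sym2 V) : 0 ≤ pushed G T x e' :=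
  sum_nonneg fun e _ => hx0 e

omit [DecidableEq V] in
lemma sum_pushed_eq_sum_card_mul (S : Finset (Sym2 V)) :
    ∑ e' ∈ S, pushed G T x e' =
      ∑ e ∈ G.edgeFinset,
        (#(S.filter (OnTreePath T (Quot.out e).1 (Quot.out e).2)) : ℝ) * x e := by
  simp_rw [pushed, sum_filter]
  rw [sum_comm]
  refine sum_congr rfl fun e _ => ?_
  rw [← sum_filter, sum_const, nsmul_eq_mul]

omit [DecidableEq V] in
lemma sum_cutEdges_le_sum_pushed (hT : T.Preconnected) (hx0 : ∀ e, 0 ≤ x e) (C : Finset V) :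
    ∑ e ∈ cutEdges G C, x e ≤ ∑ e' ∈ cutEdges T C, pushed G T x e' := by
  rw [sum_pushed_eq_sum_card_mul]
  calc ∑ e ∈ cutEdges G C, x e
      ≤ ∑ e ∈ cutEdges G C,
          (#((cutEdges T C).filter (OnTreePath T (Quot.out e).1 (Quot.out e).2)) : ℝ) * x e := by
        refine sum_le_sum fun e he => le_mul_of_one_le_left (hx0 e) ?_
        obtain ⟨e', he'⟩ := hT.exists_mem_cutEdges_onTreePath (mem_filter.mp he).2
        exact_mod_cast card_pos.mpr ⟨e', mem_filter.mpr he'⟩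
    _ ≤ ∑ e ∈ G.edgeFinset,
          (#((cutEdges T C).filter (OnTreePath T (Quot.out e).1 (Quot.out e).2)) : ℝ) * x e :=
        sum_le_sum_of_subset_of_nonneg (filter_subset _ _)
          fun e _ _ => mul_nonneg (Nat.cast_nonneg _) (hx0 e)

lemma sum_pushed_edgeFinset_eq_sum_dist_mul (hT : T.IsAcyclic) :
    ∑ e' ∈ T.edgeFinset, pushed G T x e' =
      ∑ e ∈ G.edgeFinset, (T.dist (Quot.out e).1 (Quot.out e).2 : ℝ) * x e := by
  rw [sum_pushed_eq_sum_card_mul]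
  simp_rw [hT.card_filter_onTreePath]

end Pushed

theorem statement5_general (V : Type) [Fintype V] (G T : SimpleGraph V)
    (htree : T.IsTree)
    (ℓ : ℕ) (b : Fin ℓ → Finset V → ℝ)
    (x : Sym2 V → ℝ) (hx0 : ∀ e, 0 ≤ x e)
    (hxfeas : ∀ C : Finset V, IsCut C → ∑ i, b i C ≤ ∑ e ∈ cutEdges G C, x e) :
    (∀ e', 0 ≤ pushed G T x e') ∧
    (∀ C : Finset V, IsCut C →
      ∑ i, b i C ≤ ∑ e' ∈ cutEdges T C, pushed G T x e') ∧
    (∑ e' ∈ T.edgeFinset, pushed G T x e' =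
      ∑ e ∈ G.edgeFinset, (T.dist (Quot.out e).1 (Quot.out e).2 : ℝ) * x e) :=
  ⟨pushed_nonneg hx0,
    fun C hC => (hxfeas C hC).trans (sum_cutEdges_le_sum_pushed htree.1.preconnected hx0 C),
    sum_pushed_edgeFinset_eq_sum_dist_mul htree.2⟩

/-- Pushing a feasible solution of `LP^L(G)` onto a spanning subtree `T` along
unique tree paths yields a feasible solution of `LP^L(T)` with the same cut values, whose
objective value equals `∑_{e={u,v}∈E(G)} d_T(u,v) · x_e`. -/
theorem statement5 (V : Type) [Fintype V] [DecidableEq V] (G T : SimpleGraph V)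
    (hG : G.Connected) (hsub : T ≤ G) (htree : T.IsTree)
    (ℓ : ℕ) (b : Fin ℓ → Finset V → ℝ) (hb : CutNonneg ℓ b)
    (x : Sym2 V → ℝ) (hx0 : ∀ e, 0 ≤ x e)
    (hxfeas : ∀ C : Finset V, IsCut C → ∑ i, b i C ≤ ∑ e ∈ cutEdges G C, x e) :
    (∀ e', 0 ≤ pushed G T x e') ∧
    (∀ C : Finset V, IsCut C →
      ∑ i, b i C ≤ ∑ e' ∈ cutEdges T C, pushed G T x e') ∧
    (∑ e' ∈ T.edgeFinset, pushed G T x e' =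
      ∑ e ∈ G.edgeFinset, (T.dist (Quot.out e).1 (Quot.out e).2 : ℝ) * x e) :=
  statement5_general V G T htree ℓ b x hx0 hxfeas
end

section
/- For every finite connected simple graph G = (V,E) and every K ⊆ V with |K| ≥ 2: LP_ST(G,K) ≤ ST(G,K) ≤ 2 · LP_ST(G,K). -/
open Finset
open scoped Classical

variable {V : Type} [Fintype V] [DecidableEq V]

/-- `ST(G,K)`: the minimum number of edges of a connected subgraph of `G` whose vertex set
contains `K` (minimum Steiner tree cost with unit edge weights). -/
noncomputable def steinerCost (G : SimpleGraph V) (K : Finset V) : ℕ :=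
  sInf { n | ∃ H : G.Subgraph, H.Connected ∧ ↑K ⊆ H.verts ∧ H.edgeSet.ncard = n }

/-- The optimum value of `LP_ST(G,K)`: minimize `∑_{e∈E} x_e` subject to
`∑_{e∈δ(C)} x_e ≥ 1` for every cut `C` separating `K`, `x ≥ 0`. -/
noncomputable def LPST (G : SimpleGraph V) (K : Finset V) : ℝ :=
  sInf { y | ∃ x : Sym2 V → ℝ, (∀ e, 0 ≤ x e) ∧
    (∀ C : Finset V, IsCut C → (K ∩ C).Nonempty → (K \ C).Nonempty →
      1 ≤ ∑ e ∈ cutEdges G C, x e) ∧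
    y = ∑ e ∈ G.edgeFinset, x e }

/-!
`LP ≤ ST`: the edge indicator of a connected subgraph through `K` is feasible, since a path in it
between terminals on opposite sides of a cut crosses the cut.

`ST ≤ 2 · LP` by moat growing. At level `r` the clusters are the classes of `K` under chains of
terminals at distance `≤ r`, and `M` is the first level with a single cluster. For `r < M` the
moat `{w | 2 · d(w, S) ≤ r}` of each cluster `S` separates `K`, and an edge `ab` crosses at most
two of all these moats: moats of one level are disjoint, the levels at which `a` is inside and `b`
outside differ by at most one, and if both orientations occur they occur at one level. So the
number `∑_{r<M} #clusters(r)` of moats is at most `2 ∑ x` for every feasible `x`. Conversely,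
joining the level-`r` clusters by terminal pairs at distance `≤ r + 1` (Kruskal on the metric
closure of `K`) connects `K` by pairs of total distance at most `∑_{r<M} #clusters(r)`, and
shortest paths between these pairs form a connected subgraph with no more edges.
-/

namespace SteinerTree

open Relation SimpleGraph

section ReachClasses

variable {α : Type*} {R R' : α → α → Prop} {K : Finset α}

variable (R K) in
noncomputable def reachClass (t : α) : Finset α := K.filter (ReflTransGen R t)

abbrev pairRel (P : Finset (α × α)) : α → α → Prop := SymmGen fun a b => (a, b) ∈ P

lemma mem_reachClass {t u : α} : u ∈ reachClass R K t ↔ u ∈ K ∧ ReflTransGen R t u :=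
  mem_filter

lemma self_mem_reachClass {t : α} (ht : t ∈ K) : t ∈ reachClass R K t :=
  mem_reachClass.2 ⟨ht, .refl⟩

lemma reachClass_eq_of_reflTransGen [Std.Symm R] {t u : α} (h : ReflTransGen R t u) :
    reachClass R K t = reachClass R K u := by
  ext v
  simp only [mem_reachClass]
  exact and_congr_right fun _ => ⟨(symm h).trans, h.trans⟩

lemma exists_not_reflTransGen_of_reflTransGen {t u : α} (h : ReflTransGen R' t u)
    (h' : ¬ ReflTransGen R t u) : ∃ a b, R' a b ∧ ¬ ReflTransGen R a b := by
  by_contra! hR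
  exact h' (ReflTransGen.lift' id hR t u h)

lemma reachClass_eq_filter (hRR' : ∀ t ∈ K, ∀ u ∈ K, ReflTransGen R t u → ReflTransGen R' t u)
    {t : α} (ht : t ∈ K) :
    reachClass R' K t = K.filter fun u => ∃ s ∈ reachClass R K t, ReflTransGen R' s u := by
  ext u
  simp only [mem_filter, mem_reachClass]
  refine and_congr_right fun _ => ⟨fun h => ⟨t, ⟨ht, .refl⟩, h⟩, ?_⟩
  rintro ⟨s, ⟨hs, hts⟩, hsu⟩
  exact (hRR' t ht s hs hts).trans hsu

variable [DecidableEq α]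

variable (R K) in
noncomputable def reachClasses : Finset (Finset α) := K.image (reachClass R K)

lemma eq_of_mem_reachClasses [Std.Symm R] {S S' : Finset α} (hS : S ∈ reachClasses R K)
    (hS' : S' ∈ reachClasses R K) {u : α} (hu : u ∈ S) (hu' : u ∈ S') : S = S' := by
  obtain ⟨t, -, rfl⟩ := mem_image.1 hS
  obtain ⟨t', -, rfl⟩ := mem_image.1 hS'
  rw [reachClass_eq_of_reflTransGen (mem_reachClass.1 hu).2,
    reachClass_eq_of_reflTransGen (mem_reachClass.1 hu').2]

lemma reachClasses_eq_image
    (hRR' : ∀ t ∈ K, ∀ u ∈ K, ReflTransGen R t u → ReflTransGen R' t u) :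
    reachClasses R' K =
      (reachClasses R K).image fun S => K.filter fun u => ∃ s ∈ S, ReflTransGen R' s u := by
  rw [reachClasses, reachClasses, image_image]
  exact image_congr fun t ht => reachClass_eq_filter hRR' ht

lemma card_reachClasses_le
    (hRR' : ∀ t ∈ K, ∀ u ∈ K, ReflTransGen R t u → ReflTransGen R' t u) :
    #(reachClasses R' K) ≤ #(reachClasses R K) := by
  rw [reachClasses_eq_image hRR']
  exact card_image_le

lemma card_reachClasses_lt [Std.Symm R']
    (hRR' : ∀ t ∈ K, ∀ u ∈ K, ReflTransGen R t u → ReflTransGen R' t u) {a b : α}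
    (ha : a ∈ K) (hb : b ∈ K) (hab' : ReflTransGen R' a b) (hab : ¬ ReflTransGen R a b) :
    #(reachClasses R' K) < #(reachClasses R K) := by
  refine (card_reachClasses_le hRR').lt_of_ne fun heq => hab ?_
  rw [reachClasses_eq_image hRR'] at heq
  have hsame : reachClass R K a = reachClass R K b := by
    refine card_image_iff.1 heq (mem_image_of_mem _ ha) (mem_image_of_mem _ hb) ?_
    rw [← reachClass_eq_filter hRR' ha, ← reachClass_eq_filter hRR' hb,
      reachClass_eq_of_reflTransGen hab']
  exact (mem_reachClass.1 (hsame ▸ self_mem_reachClass hb)).2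

lemma card_reachClasses_insert_lt {P : Finset (α × α)} {a b : α} (ha : a ∈ K) (hb : b ∈ K)
    (hab : ¬ ReflTransGen (pairRel P) a b) :
    #(reachClasses (pairRel (insert (a, b) P)) K) < #(reachClasses (pairRel P) K) := by
  have hmono : pairRel P ≤ pairRel (insert (a, b) P) := fun _ _ =>
    Or.imp (mem_insert_of_mem ·) (mem_insert_of_mem ·)
  exact card_reachClasses_lt (fun t _ u _ => ReflTransGen.mono hmono t u) ha hb
    (.single (.inl (mem_insert_self _ _))) hab

end ReachClasses

lemma card_le_two_of_forall_lt_imp_le_succ {A : Finset ℕ}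
    (hA : ∀ m ∈ A, ∀ n ∈ A, m < n → n ≤ m + 1) : #A ≤ 2 := by
  rcases A.eq_empty_or_nonempty with rfl | hne
  · simp
  have hsub : A ⊆ Icc (A.min' hne) (A.min' hne + 1) := fun n hn => by
    have hmin := A.min'_le n hn
    rcases hmin.eq_or_lt with h | h
    · exact mem_Icc.2 ⟨hmin, by omega⟩
    · exact mem_Icc.2 ⟨hmin, hA _ (A.min'_mem hne) n hn h⟩
  exact (card_le_card hsub).trans (by rw [Nat.card_Icc]; omega)

lemma card_add_card_le_two {A B : Finset ℕ}
    (hA : ∀ m ∈ A, ∀ n ∈ A, m < n → n ≤ m + 1) (hB : ∀ m ∈ B, ∀ n ∈ B, m < n → n ≤ m + 1)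
    (hAB : ∀ m ∈ A, ∀ n ∈ B, m = n) : #A + #B ≤ 2 := by
  rcases A.eq_empty_or_nonempty with rfl | ⟨m, hm⟩
  · simpa using card_le_two_of_forall_lt_imp_le_succ hB
  rcases B.eq_empty_or_nonempty with rfl | ⟨n, hn⟩
  · simpa using card_le_two_of_forall_lt_imp_le_succ hA
  have hA1 : #A ≤ 1 := card_le_one.2 fun m₁ h₁ m₂ h₂ => (hAB m₁ h₁ n hn).trans (hAB m₂ h₂ n hn).symm
  have hB1 : #B ≤ 1 := card_le_one.2 fun n₁ h₁ n₂ h₂ => (hAB m hm n₁ h₁).symm.trans (hAB m hm n₂ h₂)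
  omega

variable {V : Type} {G : SimpleGraph V} {K : Finset V}

section Subgraphs

lemma crosses_mk_iff {C : Finset V} {a b : V} :
    Crosses C s(a, b) ↔ (a ∈ C ∧ b ∉ C) ∨ (b ∈ C ∧ a ∉ C) := by
  refine ⟨fun ⟨u, v, h, hu, hv⟩ => ?_, ?_⟩
  · rcases Sym2.eq_iff.1 h with ⟨rfl, rfl⟩ | ⟨rfl, rfl⟩ <;> tauto
  · rintro (⟨ha, hb⟩ | ⟨hb, ha⟩)
    exacts [⟨a, b, rfl, ha, hb⟩, ⟨b, a, Sym2.eq_swap, hb, ha⟩]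

lemma exists_mem_edgeSet_crosses {H : G.Subgraph} (hH : H.Preconnected) {C : Finset V}
    {u v : V} (hu : u ∈ H.verts) (hv : v ∈ H.verts) (huC : u ∈ C) (hvC : v ∉ C) :
    ∃ e ∈ H.edgeSet, Crosses C e := by
  obtain ⟨q, hq⟩ := (Subgraph.preconnected_iff_forall_exists_walk_subgraph H).1 hH hu hv
  obtain ⟨d, hd, hdC, hdC'⟩ := q.exists_boundary_dart C huC hvC
  refine ⟨d.edge, Subgraph.edgeSet_mono hq ?_, d.fst, d.snd, rfl, hdC, hdC'⟩
  rw [Walk.edgeSet_toSubgraph]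
  exact List.mem_map_of_mem hd

lemma steinerCost_le_ncard {H : G.Subgraph} (hH : H.Connected) (hKH : ↑K ⊆ H.verts) :
    steinerCost G K ≤ H.edgeSet.ncard :=
  Nat.sInf_le ⟨H, hH, hKH, rfl⟩

lemma exists_ncard_eq_steinerCost {H : G.Subgraph} (hH : H.Connected) (hKH : ↑K ⊆ H.verts) :
    ∃ T : G.Subgraph, T.Connected ∧ ↑K ⊆ T.verts ∧ T.edgeSet.ncard = steinerCost G K :=
  Nat.sInf_mem (s := {n | ∃ T : G.Subgraph, T.Connected ∧ (K : Set V) ⊆ T.verts ∧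
    T.edgeSet.ncard = n}) ⟨_, H, hH, hKH, rfl⟩

lemma exists_walk_le_of_reflTransGen {H : G.Subgraph} {P : Finset (V × V)}
    (w : ∀ p : V × V, G.Walk p.1 p.2) (hPH : ∀ p ∈ P, (w p).toSubgraph ≤ H) {t u : V}
    (ht : t ∈ H.verts) (htu : ReflTransGen (pairRel P) t u) :
    ∃ q : G.Walk t u, q.toSubgraph ≤ H := by
  induction htu with
  | refl => exact ⟨.nil, by simpa using ht⟩
  | tail _ hstep ih =>
    obtain ⟨q, hq⟩ := ih
    rcases hstep with h | h
    · exact ⟨q.append (w (_, _)), by simpa [Walk.toSubgraph_append] using ⟨hq, hPH _ h⟩⟩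
    · exact ⟨q.append (w (_, _)).reverse, by simpa [Walk.toSubgraph_append] using ⟨hq, hPH _ h⟩⟩

lemma sum_indicator_edgeSet [Fintype V] (H : G.Subgraph) :
    ∑ e ∈ G.edgeFinset, H.edgeSet.indicator (1 : Sym2 V → ℝ) e = H.edgeSet.ncard := by
  simp only [Set.indicator_apply, Pi.one_apply]
  rw [sum_boole, ← Set.ncard_coe_finset, coe_filter]
  congr 2
  ext e
  exact ⟨fun h => h.2, fun h => ⟨G.mem_edgeFinset.2 (H.edgeSet_subset h), h⟩⟩

end Subgraphs

section CutLP

variable [Fintype V] [DecidableEq V]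

variable (G K) in
def IsCutLPFeasible (x : Sym2 V → ℝ) : Prop :=
  (∀ e, 0 ≤ x e) ∧ ∀ C : Finset V, IsCut C → (K ∩ C).Nonempty → (K \ C).Nonempty →
    1 ≤ ∑ e ∈ cutEdges G C, x e

lemma LPST_le {x : Sym2 V → ℝ} (hx : IsCutLPFeasible G K x) :
    LPST G K ≤ ∑ e ∈ G.edgeFinset, x e :=
  csInf_le ⟨0, by rintro _ ⟨x, hx0, -, rfl⟩; exact sum_nonneg fun e _ => hx0 e⟩
    ⟨x, hx.1, hx.2, rfl⟩

lemma le_LPST {a : ℝ} {x₀ : Sym2 V → ℝ} (hx₀ : IsCutLPFeasible G K x₀)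
    (h : ∀ x, IsCutLPFeasible G K x → a ≤ ∑ e ∈ G.edgeFinset, x e) : a ≤ LPST G K :=
  le_csInf ⟨_, x₀, hx₀.1, hx₀.2, rfl⟩ (by rintro _ ⟨x, hx0, hx, rfl⟩; exact h x ⟨hx0, hx⟩)

lemma isCutLPFeasible_indicator {H : G.Subgraph} (hH : H.Connected) (hKH : ↑K ⊆ H.verts) :
    IsCutLPFeasible G K (H.edgeSet.indicator 1) := by
  have hx0 : ∀ e, (0 : ℝ) ≤ H.edgeSet.indicator 1 e :=
    Set.indicator_nonneg fun _ _ => zero_le_one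
  refine ⟨hx0, fun C _ ⟨u, hu⟩ ⟨v, hv⟩ => ?_⟩
  rw [mem_inter] at hu
  rw [mem_sdiff] at hv
  obtain ⟨e, heH, heC⟩ :=
    exists_mem_edgeSet_crosses hH.preconnected (hKH hu.1) (hKH hv.1) hu.2 hv.2
  have he : e ∈ cutEdges G C := mem_filter.2 ⟨G.mem_edgeFinset.2 (H.edgeSet_subset heH), heC⟩
  calc (1 : ℝ) = H.edgeSet.indicator 1 e := by simp [heH]
    _ ≤ ∑ e ∈ cutEdges G C, H.edgeSet.indicator 1 e := single_le_sum (fun e _ => hx0 e) he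

lemma card_le_mul_sum_of_cuts {ι : Type*} {I : Finset ι} {C : ι → Finset V} {k : ℕ}
    (hC : ∀ i ∈ I, IsCut (C i) ∧ (K ∩ C i).Nonempty ∧ (K \ C i).Nonempty)
    (hk : ∀ e ∈ G.edgeFinset, #(I.filter fun i => Crosses (C i) e) ≤ k)
    {x : Sym2 V → ℝ} (hx : IsCutLPFeasible G K x) :
    (#I : ℝ) ≤ k * ∑ e ∈ G.edgeFinset, x e := by
  calc (#I : ℝ) = ∑ i ∈ I, 1 := by simp
    _ ≤ ∑ i ∈ I, ∑ e ∈ cutEdges G (C i), x e :=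
      sum_le_sum fun i hi => hx.2 _ (hC i hi).1 (hC i hi).2.1 (hC i hi).2.2
    _ = ∑ e ∈ G.edgeFinset, #(I.filter fun i => Crosses (C i) e) * x e := by
      simp only [cutEdges, sum_filter, card_filter, Nat.cast_sum, sum_mul]
      rw [sum_comm]
      simp
    _ ≤ ∑ e ∈ G.edgeFinset, k * x e :=
      sum_le_sum fun e he => mul_le_mul_of_nonneg_right (by exact_mod_cast hk e he) (hx.1 e)
    _ = k * ∑ e ∈ G.edgeFinset, x e := (mul_sum ..).symm

end CutLP

section Clusters

variable (G K) in
def nearRel (r : ℕ) (a b : V) : Prop := a ∈ K ∧ b ∈ K ∧ G.dist a b ≤ r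

instance (r : ℕ) : Std.Symm (nearRel G K r) :=
  ⟨fun _ _ ⟨ha, hb, h⟩ => ⟨hb, ha, G.dist_comm ▸ h⟩⟩

lemma nearRel_mono {r r' : ℕ} (h : r ≤ r') : nearRel G K r ≤ nearRel G K r' :=
  fun _ _ ⟨ha, hb, hd⟩ => ⟨ha, hb, hd.trans h⟩

variable (G K) in
noncomputable def mergeLevel : ℕ :=
  sInf {r | ∀ t ∈ K, ∀ u ∈ K, ReflTransGen (nearRel G K r) t u}

lemma reflTransGen_nearRel_mergeLevel {t u : V} (ht : t ∈ K) (hu : u ∈ K) :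
    ReflTransGen (nearRel G K (mergeLevel G K)) t u := by
  have hdiam : ∀ t ∈ K, ∀ u ∈ K,
      ReflTransGen (nearRel G K ((K ×ˢ K).sup fun p => G.dist p.1 p.2)) t u :=
    fun t ht u hu => .single ⟨ht, hu, le_sup (f := fun p : V × V => G.dist p.1 p.2)
      (mem_product.2 ⟨ht, hu⟩ : (t, u) ∈ K ×ˢ K)⟩
  exact Nat.sInf_mem (s := {r | ∀ t ∈ K, ∀ u ∈ K, ReflTransGen (nearRel G K r) t u})
    ⟨_, hdiam⟩ t ht u hu

variable [DecidableEq V]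

variable (G K) in
noncomputable def clusters (r : ℕ) : Finset (Finset V) := reachClasses (nearRel G K r) K

lemma subset_of_mem_clusters {r : ℕ} {S : Finset V} (hS : S ∈ clusters G K r) : S ⊆ K := by
  obtain ⟨t, -, rfl⟩ := mem_image.1 hS
  exact filter_subset _ _

lemma mem_of_mem_clusters {r : ℕ} {S : Finset V} (hS : S ∈ clusters G K r) {u v : V}
    (hu : u ∈ S) (hv : v ∈ K) (huv : G.dist u v ≤ r) : v ∈ S := by
  obtain ⟨t, -, rfl⟩ := mem_image.1 hS
  obtain ⟨huK, htu⟩ := mem_reachClass.1 hu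
  exact mem_reachClass.2 ⟨hv, htu.tail ⟨huK, hv, huv⟩⟩

lemma exists_superset_mem_clusters {r r' : ℕ} (hr : r ≤ r') {S : Finset V}
    (hS : S ∈ clusters G K r) : ∃ S' ∈ clusters G K r', S ⊆ S' := by
  obtain ⟨t, ht, rfl⟩ := mem_image.1 hS
  refine ⟨reachClass (nearRel G K r') K t, mem_image_of_mem _ ht, fun u hu => ?_⟩
  obtain ⟨huK, htu⟩ := mem_reachClass.1 hu
  exact mem_reachClass.2 ⟨huK, ReflTransGen.mono (nearRel_mono hr) _ _ htu⟩

lemma exists_notMem_of_lt_mergeLevel {r : ℕ} (hr : r < mergeLevel G K) {S : Finset V}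
    (hS : S ∈ clusters G K r) : ∃ w ∈ K, w ∉ S := by
  by_contra! hKS
  obtain ⟨t, -, rfl⟩ := mem_image.1 hS
  refine Nat.notMem_of_lt_sInf hr fun u hu v hv => ?_
  exact (symm (mem_reachClass.1 (hKS u hu)).2).trans (mem_reachClass.1 (hKS v hv)).2

variable (G K) in
noncomputable def moatFamily : Finset ((_ : ℕ) × Finset V) :=
  (range (mergeLevel G K)).sigma (clusters G K)

lemma mem_moatFamily {i : (_ : ℕ) × Finset V} :
    i ∈ moatFamily G K ↔ i.1 < mergeLevel G K ∧ i.2 ∈ clusters G K i.1 := by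
  simp [moatFamily]

end Clusters

section Moats

variable [Fintype V]

variable (G) in
/-- The ball of radius `r / 2` around `S`, with distances doubled to stay in `ℕ`. -/
noncomputable def moat (r : ℕ) (S : Finset V) : Finset V :=
  univ.filter fun w => ∃ u ∈ S, 2 * G.dist w u ≤ r

lemma mem_moat {r : ℕ} {S : Finset V} {w : V} :
    w ∈ moat G r S ↔ ∃ u ∈ S, 2 * G.dist w u ≤ r := by
  simp [moat]

lemma moat_mono {r r' : ℕ} (hr : r ≤ r') {S S' : Finset V} (hS : S ⊆ S') :
    moat G r S ⊆ moat G r' S' := fun w hw => by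
  obtain ⟨u, hu, h⟩ := mem_moat.1 hw
  exact mem_moat.2 ⟨u, hS hu, h.trans hr⟩

variable [DecidableEq V]

lemma notMem_moat {r : ℕ} {S : Finset V} (hS : S ∈ clusters G K r) {w : V} (hwK : w ∈ K)
    (hwS : w ∉ S) : w ∉ moat G r S := fun hw => by
  obtain ⟨u, hu, h⟩ := mem_moat.1 hw
  exact hwS (mem_of_mem_clusters hS hu hwK (by rw [G.dist_comm]; omega))

lemma eq_of_mem_moat (hG : G.Connected) {r : ℕ} {S S' : Finset V} (hS : S ∈ clusters G K r)
    (hS' : S' ∈ clusters G K r) {w : V} (hw : w ∈ moat G r S) (hw' : w ∈ moat G r S') :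
    S = S' := by
  obtain ⟨u, hu, hwu⟩ := mem_moat.1 hw
  obtain ⟨u', hu', hwu'⟩ := mem_moat.1 hw'
  have : G.dist u u' ≤ r := by
    have := hG.dist_triangle (u := u) (v := w) (w := u')
    have := G.dist_comm (u := u) (v := w)
    omega
  exact eq_of_mem_reachClasses hS hS' (mem_of_mem_clusters hS hu (subset_of_mem_clusters hS' hu')
    this) hu'

lemma subset_of_mem_moat (hG : G.Connected) {r r' : ℕ} (hr : r ≤ r') {S S' : Finset V}
    (hS : S ∈ clusters G K r) (hS' : S' ∈ clusters G K r') {w : V} (hw : w ∈ moat G r S)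
    (hw' : w ∈ moat G r' S') : S ⊆ S' := by
  obtain ⟨T, hT, hST⟩ := exists_superset_mem_clusters hr hS
  rwa [← eq_of_mem_moat hG hT hS' (moat_mono hr hST hw) hw']

lemma moat_separates {r : ℕ} (hr : r < mergeLevel G K) {S : Finset V} (hS : S ∈ clusters G K r) :
    IsCut (moat G r S) ∧ (K ∩ moat G r S).Nonempty ∧ (K \ moat G r S).Nonempty := by
  obtain ⟨t, ht, rfl⟩ := mem_image.1 hS
  have htS : t ∈ moat G r (reachClass (nearRel G K r) K t) :=
    mem_moat.2 ⟨t, self_mem_reachClass ht, by simp⟩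
  obtain ⟨w, hwK, hwS⟩ := exists_notMem_of_lt_mergeLevel hr hS
  have hwS' := notMem_moat hS hwK hwS
  exact ⟨⟨⟨t, htS⟩, fun h => hwS' (h ▸ mem_univ w)⟩, ⟨t, mem_inter.2 ⟨ht, htS⟩⟩,
    ⟨w, mem_sdiff.2 ⟨hwK, hwS'⟩⟩⟩

variable (G K) in
noncomputable def exitMoats (a b : V) : Finset ((_ : ℕ) × Finset V) :=
  (moatFamily G K).filter fun i => a ∈ moat G i.1 i.2 ∧ b ∉ moat G i.1 i.2

lemma mem_exitMoats {a b : V} {i : (_ : ℕ) × Finset V} :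
    i ∈ exitMoats G K a b ↔ (i.1 < mergeLevel G K ∧ i.2 ∈ clusters G K i.1) ∧
      a ∈ moat G i.1 i.2 ∧ b ∉ moat G i.1 i.2 := by
  rw [exitMoats, mem_filter, mem_moatFamily]

lemma injOn_fst_exitMoats (hG : G.Connected) (a b : V) :
    Set.InjOn Sigma.fst (exitMoats G K a b : Set ((_ : ℕ) × Finset V)) := by
  rintro ⟨r, S⟩ hi ⟨r', S'⟩ hj (rfl : r = r')
  obtain ⟨⟨-, hS⟩, ha, -⟩ := mem_exitMoats.1 hi
  obtain ⟨⟨-, hS'⟩, ha', -⟩ := mem_exitMoats.1 hj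
  exact congrArg _ (eq_of_mem_moat hG hS hS' ha ha')

lemma fst_le_succ_of_mem_exitMoats (hG : G.Connected) {a b : V} (hab : G.Adj a b)
    {i j : (_ : ℕ) × Finset V} (hi : i ∈ exitMoats G K a b) (hj : j ∈ exitMoats G K a b)
    (hij : i.1 < j.1) : j.1 ≤ i.1 + 1 := by
  obtain ⟨⟨-, hSi⟩, hai, -⟩ := mem_exitMoats.1 hi
  obtain ⟨⟨-, hSj⟩, haj, hbj⟩ := mem_exitMoats.1 hj
  obtain ⟨u, hu, hau⟩ := mem_moat.1 hai
  have hbu : ¬ 2 * G.dist b u ≤ j.1 := fun h =>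
    hbj (mem_moat.2 ⟨u, subset_of_mem_moat hG hij.le hSi hSj hai haj hu, h⟩)
  have := hG.dist_triangle (u := b) (v := a) (w := u)
  have := SimpleGraph.dist_eq_one_iff_adj.2 hab.symm
  omega

lemma fst_le_of_mem_exitMoats_swap (hG : G.Connected) {a b : V} (hab : G.Adj a b)
    {i j : (_ : ℕ) × Finset V} (hi : i ∈ exitMoats G K a b) (hj : j ∈ exitMoats G K b a) :
    j.1 ≤ i.1 := by
  by_contra! hij
  obtain ⟨⟨-, hSi⟩, hai, -⟩ := mem_exitMoats.1 hi
  obtain ⟨⟨-, hSj⟩, hbj, haj⟩ := mem_exitMoats.1 hj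
  obtain ⟨u, hu, hau⟩ := mem_moat.1 hai
  obtain ⟨v, hv, hbv⟩ := mem_moat.1 hbj
  have hvu : G.dist v u ≤ j.1 := by
    have := hG.dist_triangle (u := v) (v := b) (w := u)
    have := hG.dist_triangle (u := b) (v := a) (w := u)
    have := SimpleGraph.dist_eq_one_iff_adj.2 hab.symm
    have := G.dist_comm (u := v) (v := b)
    have := G.dist_comm (u := a) (v := u)
    omega
  exact haj (mem_moat.2
    ⟨u, mem_of_mem_clusters hSj hv (subset_of_mem_clusters hSi hu) hvu, by omega⟩)

lemma card_filter_crosses_le_two (hG : G.Connected) {a b : V} (hab : G.Adj a b) :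
    #((moatFamily G K).filter fun i => Crosses (moat G i.1 i.2) s(a, b)) ≤ 2 := by
  have hsub : (moatFamily G K).filter (fun i => Crosses (moat G i.1 i.2) s(a, b)) ⊆
      exitMoats G K a b ∪ exitMoats G K b a := fun i hi => by
    rw [mem_filter, crosses_mk_iff] at hi
    rw [mem_union, exitMoats, exitMoats, mem_filter, mem_filter]
    tauto
  calc _ ≤ #(exitMoats G K a b ∪ exitMoats G K b a) := card_le_card hsub
    _ ≤ #(exitMoats G K a b) + #(exitMoats G K b a) := card_union_le _ _
    _ = #((exitMoats G K a b).image Sigma.fst) + #((exitMoats G K b a).image Sigma.fst) := by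
      rw [card_image_of_injOn (injOn_fst_exitMoats hG a b),
        card_image_of_injOn (injOn_fst_exitMoats hG b a)]
    _ ≤ 2 := by
      refine card_add_card_le_two ?_ ?_ ?_ <;> simp only [mem_image]
      · rintro _ ⟨i, hi, rfl⟩ _ ⟨j, hj, rfl⟩ hij
        exact fst_le_succ_of_mem_exitMoats hG hab hi hj hij
      · rintro _ ⟨i, hi, rfl⟩ _ ⟨j, hj, rfl⟩ hij
        exact fst_le_succ_of_mem_exitMoats hG hab.symm hi hj hij
      · rintro _ ⟨i, hi, rfl⟩ _ ⟨j, hj, rfl⟩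
        exact (fst_le_of_mem_exitMoats_swap hG hab.symm hj hi).antisymm
          (fst_le_of_mem_exitMoats_swap hG hab hi hj)

lemma card_moatFamily_le (hG : G.Connected) {x : Sym2 V → ℝ}
    (hx : IsCutLPFeasible G K x) :
    (#(moatFamily G K) : ℝ) ≤ 2 * ∑ e ∈ G.edgeFinset, x e := by
  refine card_le_mul_sum_of_cuts (C := fun i => moat G i.1 i.2) (fun i hi => ?_) (fun e he => ?_) hx
  · exact moat_separates (mem_moatFamily.1 hi).1 (mem_moatFamily.1 hi).2
  · induction e using Sym2.ind with
    | _ a b => exact card_filter_crosses_le_two hG (G.mem_edgeFinset.1 he)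

end Moats

section Primal

variable [DecidableEq V]

/-- Each pair added greedily costs at most `c` and merges two classes, so the potential
`cost + c · #classes` does not increase. -/
lemma exists_pairs_connecting (c : ℕ) (P : Finset (V × V))
    (hP : ∀ p ∈ P, nearRel G K c p.1 p.2) :
    ∃ Q : Finset (V × V), (∀ q ∈ Q, nearRel G K c q.1 q.2) ∧
      (∀ t ∈ K, ∀ u ∈ K, ReflTransGen (nearRel G K c) t u → ReflTransGen (pairRel Q) t u) ∧
      ∑ q ∈ Q, G.dist q.1 q.2 + c * #(clusters G K c) ≤
        ∑ p ∈ P, G.dist p.1 p.2 + c * #(reachClasses (pairRel P) K) := by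
  induction hn : #(reachClasses (pairRel P) K) using Nat.strong_induction_on generalizing P with
  | _ n ih =>
  by_cases hconn : ∀ t ∈ K, ∀ u ∈ K,
      ReflTransGen (nearRel G K c) t u → ReflTransGen (pairRel P) t u
  · have hPnear : pairRel P ≤ nearRel G K c := by
      rintro a b (h | h)
      exacts [hP _ h, symm (hP _ h)]
    have : #(clusters G K c) ≤ n :=
      hn ▸ card_reachClasses_le fun t _ u _ => ReflTransGen.mono hPnear t u
    exact ⟨P, hP, hconn, Nat.add_le_add_left (Nat.mul_le_mul_left c this) _⟩
  push Not at hconn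
  obtain ⟨t, -, u, -, htu, htu'⟩ := hconn
  obtain ⟨a, b, hab, hnot⟩ := exists_not_reflTransGen_of_reflTransGen htu htu'
  have hlt := hn ▸ card_reachClasses_insert_lt hab.1 hab.2.1 hnot
  obtain ⟨Q, hQ, hQconn, hQcost⟩ :=
    ih _ hlt (insert (a, b) P) (forall_mem_insert _ _ _ |>.2 ⟨hab, hP⟩) rfl
  refine ⟨Q, hQ, hQconn, ?_⟩
  rw [sum_insert fun h => hnot (.single (.inl h))] at hQcost
  have := Nat.mul_le_mul_left c (hlt : _ + 1 ≤ n)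
  have := hab.2.2
  linarith

lemma exists_pairs_connecting_clusters (r : ℕ) :
    ∃ P : Finset (V × V), (∀ p ∈ P, nearRel G K r p.1 p.2) ∧
      (∀ t ∈ K, ∀ u ∈ K, ReflTransGen (nearRel G K r) t u → ReflTransGen (pairRel P) t u) ∧
      ∑ p ∈ P, G.dist p.1 p.2 + r * #(clusters G K r) ≤ ∑ j ∈ range r, #(clusters G K j) := by
  induction r with
  | zero =>
    obtain ⟨Q, hQ, hQconn, hQcost⟩ := exists_pairs_connecting (G := G) (K := K) 0 ∅ (by simp)
    exact ⟨Q, hQ, hQconn, by simpa using hQcost⟩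
  | succ r ih =>
    obtain ⟨P, hP, hPconn, hPcost⟩ := ih
    obtain ⟨Q, hQ, hQconn, hQcost⟩ :=
      exists_pairs_connecting (r + 1) P fun p hp => nearRel_mono r.le_succ _ _ (hP p hp)
    refine ⟨Q, hQ, hQconn, ?_⟩
    have : #(reachClasses (pairRel P) K) ≤ #(clusters G K r) := card_reachClasses_le hPconn
    have := Nat.mul_le_mul_left (r + 1) this
    rw [sum_range_succ]
    linarith

lemma ncard_edgeSet_iSup_toSubgraph_le (P : Finset (V × V)) (w : ∀ p : V × V, G.Walk p.1 p.2) :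
    (⨆ p : P, (w p).toSubgraph).edgeSet.ncard ≤ ∑ p ∈ P, (w p).length := by
  have hsub : (⨆ p : P, (w p).toSubgraph).edgeSet ⊆
      ↑(P.biUnion fun p => (w p).edges.toFinset) := by
    rw [Subgraph.edgeSet_iSup, Set.iUnion_subset_iff]
    intro p e he
    rw [Walk.edgeSet_toSubgraph] at he
    exact mem_coe.2 (mem_biUnion.2 ⟨p, p.2, List.mem_toFinset.2 he⟩)
  calc _ ≤ #(P.biUnion fun p => (w p).edges.toFinset) :=
        (Set.ncard_le_ncard hsub (finite_toSet _)).trans_eq (Set.ncard_coe_finset _)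
    _ ≤ ∑ p ∈ P, #(w p).edges.toFinset := card_biUnion_le
    _ ≤ ∑ p ∈ P, (w p).length := sum_le_sum fun p _ =>
        (List.toFinset_card_le _).trans_eq (w p).length_edges

lemma exists_connected_subgraph_of_pairs (hK : 1 < #K) {P : Finset (V × V)}
    (hPK : ∀ p ∈ P, p.1 ∈ K) (hP : ∀ t ∈ K, ∀ u ∈ K, ReflTransGen (pairRel P) t u)
    (w : ∀ p : V × V, G.Walk p.1 p.2) :
    ∃ H : G.Subgraph, H.Connected ∧ ↑K ⊆ H.verts ∧ H.edgeSet.ncard ≤ ∑ p ∈ P, (w p).length := by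
  set H : G.Subgraph := ⨆ p : P, (w p).toSubgraph
  have hPH : ∀ p ∈ P, (w p).toSubgraph ≤ H := fun p hp =>
    le_iSup (fun p : P => (w p).toSubgraph) ⟨p, hp⟩
  have hKH : ↑K ⊆ H.verts := fun t ht => by
    obtain ⟨u, hu, hut⟩ := exists_mem_ne hK t
    rcases (hP t ht u hu).cases_head with rfl | ⟨c, h | h, -⟩
    · exact absurd rfl hut
    · exact (hPH _ h).1 (w (t, c)).start_mem_verts_toSubgraph
    · exact (hPH _ h).1 (w (c, t)).end_mem_verts_toSubgraph
  have hbase : ∀ v ∈ H.verts, ∃ t ∈ K, ∃ q : G.Walk v t, q.toSubgraph ≤ H := by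
    intro v hv
    rw [Subgraph.verts_iSup, Set.mem_iUnion] at hv
    obtain ⟨⟨p, hp⟩, hv⟩ := hv
    obtain ⟨q, hq⟩ := (Subgraph.preconnected_iff_forall_exists_walk_subgraph _).1
      (w p).toSubgraph_connected.preconnected hv (w p).start_mem_verts_toSubgraph
    exact ⟨p.1, hPK p hp, q, hq.trans (hPH p hp)⟩
  refine ⟨H, ?_, hKH, ncard_edgeSet_iSup_toSubgraph_le P w⟩
  rw [Subgraph.connected_iff_forall_exists_walk_subgraph]
  refine ⟨?_, fun {u v} hu hv => ?_⟩
  · obtain ⟨t, ht⟩ := card_pos.1 (by omega : 0 < #K)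
    exact ⟨t, hKH ht⟩
  obtain ⟨t, ht, qu, hqu⟩ := hbase u hu
  obtain ⟨t', ht', qv, hqv⟩ := hbase v hv
  obtain ⟨q, hq⟩ := exists_walk_le_of_reflTransGen w hPH (hKH ht) (hP t ht t' ht')
  exact ⟨qu.append (q.append qv.reverse), by simp [Walk.toSubgraph_append, hqu, hq, hqv]⟩

lemma exists_connected_subgraph_ncard_le (hG : G.Connected) (hK : 1 < #K) :
    ∃ H : G.Subgraph, H.Connected ∧ ↑K ⊆ H.verts ∧ H.edgeSet.ncard ≤ #(moatFamily G K) := by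
  obtain ⟨P, hP, hPconn, hcost⟩ :=
    exists_pairs_connecting_clusters (G := G) (K := K) (mergeLevel G K)
  choose w hw using hG.exists_walk_length_eq_dist
  obtain ⟨H, hHconn, hKH, hH⟩ := exists_connected_subgraph_of_pairs hK (fun p hp => (hP p hp).1)
    (fun t ht u hu => hPconn t ht u hu (reflTransGen_nearRel_mergeLevel ht hu))
    (fun p => w p.1 p.2)
  refine ⟨H, hHconn, hKH, ?_⟩
  rw [moatFamily, card_sigma]
  simp only [hw] at hH
  omega

end Primal

end SteinerTree

open SteinerTree

/-- For every finite connected simple graph `G` and every `K ⊆ V` with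
`|K| ≥ 2`, `LP_ST(G,K) ≤ ST(G,K) ≤ 2 · LP_ST(G,K)`. -/
theorem statement6 (V : Type) [Fintype V] [DecidableEq V] (G : SimpleGraph V)
    (hG : G.Connected) (K : Finset V) (hK : 2 ≤ K.card) :
    LPST G K ≤ (steinerCost G K : ℝ) ∧ (steinerCost G K : ℝ) ≤ 2 * LPST G K := by
  obtain ⟨H, hHconn, hKH, hH⟩ := exists_connected_subgraph_ncard_le hG hK
  obtain ⟨T, hTconn, hKT, hT⟩ := exists_ncard_eq_steinerCost hHconn hKH
  have hTfeas := isCutLPFeasible_indicator hTconn hKT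
  refine ⟨by simpa [sum_indicator_edgeSet, hT] using LPST_le hTfeas, ?_⟩
  have hST : (steinerCost G K : ℝ) ≤ #(moatFamily G K) :=
    mod_cast (steinerCost_le_ncard hHconn hKH).trans hH
  have hhalf := le_LPST hTfeas fun x hx =>
    show (steinerCost G K : ℝ) / 2 ≤ _ by linarith [card_moatFamily_le hG hx]
  linarith
end

section
/- There exists an absolute constant c > 0 such that for every finite connected simple graph G = (V,E) and every K ⊆ V with |K| = k ≥ 2: LP_MDN(G,K) ≥ c · σ_K(G) / log₂ k. -/
open Finset
open scoped Classical

variable {V : Type} [Fintype V] [DecidableEq V]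

/-- `σ_K(G) = min_{v∈V} ∑_{w∈K} d_G(v,w)`: the 1-median cost of `K` in `G`. -/
noncomputable def sigmaK (G : SimpleGraph V) (K : Finset V) : ℕ :=
  sInf { n | ∃ v : V, n = ∑ w ∈ K, G.dist v w }

/-- The optimum value of `LP_MDN(G,K)`: minimize `∑_{e∈E} x_e` subject to
`∑_{e∈δ(C)} x_e ≥ min(|K ∩ C|, |K ∖ C|)` for every cut `C`, `x ≥ 0`. -/
noncomputable def LPMDN (G : SimpleGraph V) (K : Finset V) : ℝ :=
  sInf { y | ∃ x : Sym2 V → ℝ, (∀ e, 0 ≤ x e) ∧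
    (∀ C : Finset V, IsCut C →
      (min (K ∩ C).card (K \ C).card : ℝ) ≤ ∑ e ∈ cutEdges G C, x e) ∧
    y = ∑ e ∈ G.edgeFinset, x e }

/-!
A feasible `x` of total weight `X` controls every `1`-Lipschitz `f : V → ℕ`: the sublevel cuts
`{f ≤ r}` are edge-disjoint, and summing `|K ∩ C| |K \ C| ≤ k x(δ C)` over them gives
`∑_{u,w ∈ K} |f u - f w| ≤ 2 k X`. Apply this to `f = d(·, T)` for a random `T ⊆ K` that keeps
each terminal with probability `1 / 2 ^ (j + 1)`, for the scales `j < log₂ k + 1` (Bourgain's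
embedding). For `u, w ∈ K` let `r_j` be the least radius at which a ball around `u` or `w` holds
`2 ^ j` terminals, capped at `d(u, w) / 2`. With probability at least `1 / 12`, `T` meets the
`2 ^ j` terminals near one endpoint and misses the fewer than `2 ^ (j + 1)` terminals near the
other, so `E |d(u, T) - d(w, T)| ≥ (r_{j+1} - r_j) / 12`. Telescoping over `j` and summing over
pairs gives `k σ_K ≤ ∑_{u,w ∈ K} d(u, w) ≤ 48 (log₂ k + 1) k X`.
-/

section LayerCake

variable {α : Type*}

theorem sum_sum_tsub_eq_sum_card_mul_card (K : Finset α) (f : α → ℕ) {M : ℕ}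
    (hM : ∀ w ∈ K, f w < M) :
    ∑ u ∈ K, ∑ w ∈ K, (f w - f u) =
      ∑ r ∈ range M, #{u ∈ K | f u ≤ r} * #{w ∈ K | r < f w} := by
  have hpair : ∀ u, ∀ w ∈ K,
      f w - f u = ∑ r ∈ range M, if f u ≤ r ∧ r < f w then 1 else 0 := by
    intro u w hw
    rw [sum_boole, Nat.cast_id, ← Nat.card_Ico]
    congr 1
    ext r
    simp only [mem_filter, mem_range, mem_Ico]
    have := hM w hw
    omega
  simp_rw [card_filter, sum_mul_sum, ite_zero_mul_ite_zero, mul_one]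
  rw [eq_comm, sum_comm]
  refine sum_congr rfl fun u _ => ?_
  rw [sum_comm]
  exact sum_congr rfl fun w hw => (hpair u w hw).symm

theorem abs_natCast_sub_natCast (a b : ℕ) :
    |(a : ℝ) - b| = ((a - b : ℕ) : ℝ) + ((b - a : ℕ) : ℝ) := by
  rcases le_total a b with h | h
  · rw [Nat.sub_eq_zero_of_le h, Nat.cast_sub h, abs_of_nonpos (sub_nonpos.mpr (mod_cast h))]
    simp
  · rw [Nat.sub_eq_zero_of_le h, Nat.cast_sub h, abs_of_nonneg (sub_nonneg.mpr (mod_cast h))]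
    simp

end LayerCake

section RandomSubset

variable {α : Type*} [DecidableEq α]

/-- The probability that a `p`-random subset of `K` (each element kept independently with
probability `p`) equals `T`. -/
noncomputable def subsetWeight (p : ℝ) (K T : Finset α) : ℝ := p ^ #T * (1 - p) ^ #(K \ T)

theorem subsetWeight_nonneg {p : ℝ} (hp0 : 0 ≤ p) (hp1 : p ≤ 1) (K T : Finset α) :
    0 ≤ subsetWeight p K T :=
  mul_nonneg (pow_nonneg hp0 _) (pow_nonneg (sub_nonneg.mpr hp1) _)

theorem sum_subsetWeight_disjoint {K S : Finset α} (hS : S ⊆ K) (p : ℝ) :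
    ∑ T ∈ K.powerset with Disjoint T S, subsetWeight p K T = (1 - p) ^ #S := by
  have hfilter : {T ∈ K.powerset | Disjoint T S} = (K \ S).powerset := by
    ext T
    simp [subset_sdiff]
  have hweight : ∀ T ∈ (K \ S).powerset,
      subsetWeight p K T = (1 - p) ^ #S * (p ^ #T * (1 - p) ^ (#(K \ S) - #T)) := by
    intro T hT
    have hTS : T ⊆ K \ S := mem_powerset.mp hT
    have hTK : T ⊆ K := hTS.trans sdiff_subset
    have hcard : #T + #S ≤ #K := by
      rw [← card_union_of_disjoint (disjoint_of_subset_left hTS sdiff_disjoint)]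
      exact card_le_card (union_subset hTK hS)
    rw [subsetWeight, card_sdiff_of_subset hTK, card_sdiff_of_subset hS,
      show #K - #T = #S + (#K - #S - #T) by omega, pow_add]
    ring
  rw [hfilter, sum_congr rfl hweight, ← mul_sum, sum_pow_mul_eq_add_pow]
  simp

theorem sum_subsetWeight_powerset (K : Finset α) (p : ℝ) :
    ∑ T ∈ K.powerset, subsetWeight p K T = 1 := by
  simpa using sum_subsetWeight_disjoint (empty_subset K) p

theorem sum_subsetWeight_hit_avoid {K A B : Finset α} (hA : A ⊆ K) (hB : B ⊆ K)
    (hAB : Disjoint A B) (p : ℝ) :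
    ∑ T ∈ K.powerset with Disjoint T B ∧ ¬Disjoint T A, subsetWeight p K T
      = (1 - p) ^ #B - (1 - p) ^ (#A + #B) := by
  have hsplit := sum_filter_add_sum_filter_not (K.powerset.filter (Disjoint · B))
    (fun T => Disjoint T A) (subsetWeight p K)
  rw [filter_filter, filter_filter, sum_subsetWeight_disjoint hB] at hsplit
  have havoid := sum_subsetWeight_disjoint (union_subset hA hB) p
  rw [card_union_of_disjoint hAB] at havoid
  simp only [disjoint_union_right] at havoid
  rw [← havoid, ← hsplit]
  simp only [and_comm, add_sub_cancel_left]

end RandomSubset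

theorem one_div_two_mul_natCast_le_one {m : ℕ} (hm : 0 < m) : 1 / (2 * m : ℝ) ≤ 1 := by
  have : (1 : ℝ) ≤ m := mod_cast hm
  rw [div_le_one (by positivity)]
  linarith

/-- Bernoulli's inequality puts `q ^ m` in `[1/2, 2/3]` for `q = 1 - 1/(2m)`, and the difference
is `q ^ b (1 - q ^ a) ≥ (q ^ m) ^ 2 (1 - q ^ m)`. -/
theorem one_twelfth_le_pow_sub_pow {m a b : ℕ} (hm : 0 < m) (ha : m ≤ a) (hb : b ≤ 2 * m) :
    1 / 12 ≤ (1 - 1 / (2 * m : ℝ)) ^ b - (1 - 1 / (2 * m : ℝ)) ^ (a + b) := by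
  set p : ℝ := 1 / (2 * m)
  set q : ℝ := 1 - p
  have hmp : (m : ℝ) * p = 1 / 2 := by
    simp only [p]
    field_simp
  have hp0 : 0 ≤ p := by positivity
  have hp1 : p ≤ 1 / 2 := by
    have : (1 : ℝ) ≤ m := mod_cast hm
    nlinarith
  have hq0 : 0 ≤ q := by linarith
  have hq1 : q ≤ 1 := by linarith
  have hlow : 1 / 2 ≤ q ^ m := by
    have := one_add_mul_le_pow (a := -p) (by linarith) m
    rw [← sub_eq_add_neg] at this
    linarith
  have hhigh : q ^ m ≤ 2 / 3 := by
    have hprod : q ^ m * (1 + p) ^ m ≤ 1 := by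
      rw [← mul_pow]
      exact pow_le_one₀ (by nlinarith) (by nlinarith)
    have := one_add_mul_le_pow (a := p) (by linarith) m
    nlinarith [pow_nonneg hq0 m]
  have hb' : (q ^ m) ^ 2 ≤ q ^ b := by
    rw [← pow_mul, mul_comm]
    exact pow_le_pow_of_le_one hq0 hq1 hb
  have ha' : q ^ a ≤ q ^ m := pow_le_pow_of_le_one hq0 hq1 ha
  rw [pow_add, mul_comm]
  nlinarith [pow_nonneg hq0 b]

namespace SimpleGraph

variable {α : Type*} {G : SimpleGraph α} {K : Finset α}

/-- The graph distance from `v` to the nearest point of `T`; junk value `0` when `T = ∅`. -/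
noncomputable def distToFinset (G : SimpleGraph α) (T : Finset α) (v : α) : ℕ :=
  if h : T.Nonempty then T.inf' h (G.dist v) else 0

theorem distToFinset_le_dist {T : Finset α} {t : α} (ht : t ∈ T) (v : α) :
    G.distToFinset T v ≤ G.dist v t := by
  rw [distToFinset, dif_pos ⟨t, ht⟩]
  exact inf'_le _ ht

theorem le_distToFinset {T : Finset α} (hT : T.Nonempty) {v : α} {r : ℕ}
    (h : ∀ t ∈ T, r ≤ G.dist v t) : r ≤ G.distToFinset T v := by
  rw [distToFinset, dif_pos hT]
  exact le_inf' hT _ h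

theorem distToFinset_le_of_adj (hG : G.Connected) (T : Finset α) {a b : α} (hab : G.Adj a b) :
    G.distToFinset T a ≤ G.distToFinset T b + 1 := by
  by_cases hT : T.Nonempty
  · obtain ⟨t, ht, hbt⟩ := exists_mem_eq_inf' hT (G.dist b)
    calc G.distToFinset T a ≤ G.dist a t := distToFinset_le_dist ht a
      _ ≤ G.dist a b + G.dist b t := hG.dist_triangle
      _ = G.distToFinset T b + 1 := by
        rw [dist_eq_one_iff_adj.mpr hab, distToFinset, dif_pos hT, hbt, add_comm]
  · simp [distToFinset, hT]

def IsScaleRadius (G : SimpleGraph α) (K : Finset α) (u w : α) (j r : ℕ) : Prop :=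
  2 ^ j ≤ #{t ∈ K | G.dist u t ≤ r} ∨ 2 ^ j ≤ #{t ∈ K | G.dist w t ≤ r} ∨ G.dist u w ≤ 2 * r

noncomputable def pairScale (G : SimpleGraph α) (K : Finset α) (u w : α) (j : ℕ) : ℕ :=
  sInf {r | G.IsScaleRadius K u w j r}

theorem isScaleRadius_pairScale (u w : α) (j : ℕ) :
    G.IsScaleRadius K u w j (G.pairScale K u w j) :=
  Nat.sInf_mem (s := {r | G.IsScaleRadius K u w j r})
    ⟨G.dist u w, Or.inr (Or.inr (Nat.le_mul_of_pos_left _ two_pos))⟩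

theorem not_isScaleRadius_of_lt_pairScale {u w : α} {j r : ℕ} (hr : r < G.pairScale K u w j) :
    ¬G.IsScaleRadius K u w j r :=
  Nat.notMem_of_lt_sInf hr

theorem pairScale_zero {u : α} (hu : u ∈ K) (w : α) : G.pairScale K u w 0 = 0 :=
  Nat.eq_zero_of_le_zero <| Nat.sInf_le <| Or.inl <| one_le_card.mpr ⟨u, by simp [hu]⟩

theorem dist_le_two_mul_pairScale {u w : α} (hu : u ∈ K) (hw : w ∈ K) {J : ℕ}
    (hJ : #K ≤ 2 ^ J) : G.dist u w ≤ 2 * G.pairScale K u w J := by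
  set r := G.pairScale K u w J
  have hall : ∀ v, 2 ^ J ≤ #{t ∈ K | G.dist v t ≤ r} → ∀ t ∈ K, G.dist v t ≤ r := by
    intro v hv t ht
    rw [← eq_of_subset_of_card_le (filter_subset _ K) (hJ.trans hv)] at ht
    exact (mem_filter.mp ht).2
  rcases isScaleRadius_pairScale (G := G) (K := K) u w J with h | h | h
  · linarith [hall u h w hw]
  · linarith [dist_comm (G := G) (u := u) ▸ hall w h u hu]
  · exact h

section ExpectedGap

variable [DecidableEq α]

noncomputable def expectedGap (G : SimpleGraph α) (K : Finset α) (p : ℝ) (u w : α) : ℝ :=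
  ∑ T ∈ K.powerset, subsetWeight p K T * |(G.distToFinset T u : ℝ) - G.distToFinset T w|

theorem expectedGap_comm (p : ℝ) (u w : α) : G.expectedGap K p u w = G.expectedGap K p w u := by
  simp only [expectedGap, abs_sub_comm]

theorem expectedGap_nonneg {p : ℝ} (hp0 : 0 ≤ p) (hp1 : p ≤ 1) (u w : α) :
    0 ≤ G.expectedGap K p u w :=
  sum_nonneg fun T _ => mul_nonneg (subsetWeight_nonneg hp0 hp1 K T) (abs_nonneg _)

/-- If `T` meets the `m` terminals within `r` of `u` but misses the at most `2m` terminals at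
distance `< s` from `w`, then `d(w, T) - d(u, T) ≥ s - r`; with `p = 1/(2m)` this happens with
probability at least `1/12`. -/
theorem sub_le_twelve_mul_expectedGap (hG : G.Connected) {u w : α} {r s m : ℕ} (hm : 0 < m)
    (hrs : r ≤ s) (hdist : r + s ≤ G.dist u w)
    (hu : m ≤ #{t ∈ K | G.dist u t ≤ r}) (hw : #{t ∈ K | G.dist w t < s} ≤ 2 * m) :
    (s : ℝ) - r ≤ 12 * G.expectedGap K (1 / (2 * m)) u w := by
  set p : ℝ := 1 / (2 * m)
  have hp0 : 0 ≤ p := by positivity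
  have hp1 : p ≤ 1 := one_div_two_mul_natCast_le_one hm
  set A := {t ∈ K | G.dist u t ≤ r}
  set B := {t ∈ K | G.dist w t < s}
  have hAB : Disjoint A B := by
    refine Finset.disjoint_left.mpr fun t htA htB => ?_
    have h1 := (mem_filter.mp htA).2
    have h2 := (mem_filter.mp htB).2
    have := hG.dist_triangle (u := u) (v := t) (w := w)
    rw [dist_comm (u := t)] at this
    omega
  set E := {T ∈ K.powerset | Disjoint T B ∧ ¬Disjoint T A}
  have hgap : ∀ T ∈ E, (s : ℝ) - r ≤ |(G.distToFinset T u : ℝ) - G.distToFinset T w| := by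
    intro T hT
    obtain ⟨hTK, hTB, hTA⟩ : T ⊆ K ∧ Disjoint T B ∧ ¬Disjoint T A := by
      simpa only [E, mem_filter, mem_powerset] using hT
    obtain ⟨t, htT, htA⟩ := not_disjoint_iff.mp hTA
    have hTu : G.distToFinset T u ≤ r :=
      (distToFinset_le_dist htT u).trans (mem_filter.mp htA).2
    have hTw : s ≤ G.distToFinset T w := le_distToFinset ⟨t, htT⟩ fun t' ht' => by
      by_contra! h
      exact Finset.disjoint_left.mp hTB ht' (mem_filter.mpr ⟨hTK ht', h⟩)
    rw [abs_sub_comm]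
    refine le_trans ?_ (le_abs_self _)
    have : (G.distToFinset T u : ℝ) ≤ r := mod_cast hTu
    have : (s : ℝ) ≤ G.distToFinset T w := mod_cast hTw
    linarith
  have hprob := one_twelfth_le_pow_sub_pow hm hu hw
  rw [← sum_subsetWeight_hit_avoid (filter_subset _ K) (filter_subset _ K) hAB] at hprob
  have hsr : (0 : ℝ) ≤ s - r := sub_nonneg.mpr (mod_cast hrs)
  calc (s : ℝ) - r ≤ 12 * ((∑ T ∈ E, subsetWeight p K T) * (s - r)) := by nlinarith
    _ ≤ 12 * G.expectedGap K p u w := by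
      rw [sum_mul, expectedGap]
      gcongr 12 * ?_
      refine (sum_le_sum fun T hT => mul_le_mul_of_nonneg_left (hgap T hT)
        (subsetWeight_nonneg hp0 hp1 K T)).trans ?_
      exact sum_le_sum_of_subset_of_nonneg (filter_subset _ _) fun T _ _ =>
        mul_nonneg (subsetWeight_nonneg hp0 hp1 K T) (abs_nonneg _)

theorem pairScale_succ_sub_le (hG : G.Connected) (u w : α) (j : ℕ) :
    (G.pairScale K u w (j + 1) : ℝ) - G.pairScale K u w j
      ≤ 12 * G.expectedGap K (1 / (2 * (2 ^ j : ℕ))) u w := by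
  set r := G.pairScale K u w j
  set s := G.pairScale K u w (j + 1)
  have hm : 0 < 2 ^ j := Nat.two_pow_pos j
  rcases le_or_gt s r with hsr | hrs
  · have : (s : ℝ) ≤ r := mod_cast hsr
    have := G.expectedGap_nonneg (K := K) (by positivity) (one_div_two_mul_natCast_le_one hm) u w
    linarith
  have hmin := not_isScaleRadius_of_lt_pairScale (G := G) (K := K) (u := u) (w := w)
    (show s - 1 < s by omega)
  simp only [IsScaleRadius, not_or, not_le, pow_succ] at hmin
  obtain ⟨hu', hw', hdist⟩ := hmin
  have hlt : ∀ v, {t ∈ K | G.dist v t < s} = {t ∈ K | G.dist v t ≤ s - 1} := fun v =>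
    filter_congr fun t _ => by omega
  rcases isScaleRadius_pairScale (G := G) (K := K) u w j with h | h | h
  · exact sub_le_twelve_mul_expectedGap hG hm hrs.le (by omega) h (by rw [hlt]; omega)
  · rw [expectedGap_comm]
    exact sub_le_twelve_mul_expectedGap hG hm hrs.le (by rw [dist_comm]; omega) h
      (by rw [hlt]; omega)
  · omega

theorem dist_le_sum_expectedGap (hG : G.Connected) {u w : α} (hu : u ∈ K) (hw : w ∈ K)
    {J : ℕ} (hJ : #K ≤ 2 ^ J) :
    (G.dist u w : ℝ) ≤ 24 * ∑ j ∈ range J, G.expectedGap K (1 / (2 * (2 ^ j : ℕ))) u w := by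
  have htel := sum_range_sub (fun j => (G.pairScale K u w j : ℝ)) J
  simp only [pairScale_zero hu, Nat.cast_zero, sub_zero] at htel
  have hJ' : (G.dist u w : ℝ) ≤ 2 * G.pairScale K u w J :=
    mod_cast dist_le_two_mul_pairScale hu hw hJ
  have := sum_le_sum fun j (_ : j ∈ range J) => pairScale_succ_sub_le (K := K) hG u w j
  rw [htel, ← mul_sum] at this
  linarith

end ExpectedGap

end SimpleGraph

open SimpleGraph

theorem eq_of_crosses_sublevel {α : Type} [Fintype α] {G : SimpleGraph α} {f : α → ℕ}
    (hf : ∀ a b, G.Adj a b → f a ≤ f b + 1) {e : Sym2 α} (he : e ∈ G.edgeSet) {r r' : ℕ}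
    (h : Crosses ({v | f v ≤ r} : Finset α) e) (h' : Crosses ({v | f v ≤ r'} : Finset α) e) :
    r = r' := by
  obtain ⟨u, v, rfl, hu, hv⟩ := h
  obtain ⟨u', v', huv, hu', hv'⟩ := h'
  simp only [mem_filter, mem_univ, true_and, not_le] at hu hv hu' hv'
  rcases Sym2.eq_iff.mp huv with ⟨rfl, rfl⟩ | ⟨rfl, rfl⟩
  · have := hf v u (G.mem_edgeSet.mp he).symm
    omega
  · omega

theorem card_mul_sigmaK_le {α : Type} (G : SimpleGraph α) (K : Finset α) :
    (#K * sigmaK G K : ℝ) ≤ ∑ u ∈ K, ∑ w ∈ K, (G.dist u w : ℝ) := by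
  rw [← nsmul_eq_mul, ← sum_const]
  exact sum_le_sum fun u _ => mod_cast Nat.sInf_le ⟨u, rfl⟩

def IsFeasible (G : SimpleGraph V) (K : Finset V) (x : Sym2 V → ℝ) : Prop :=
  (∀ e, 0 ≤ x e) ∧ ∀ C : Finset V, IsCut C →
    (min (K ∩ C).card (K \ C).card : ℝ) ≤ ∑ e ∈ cutEdges G C, x e

variable {G : SimpleGraph V} {K : Finset V} {x : Sym2 V → ℝ}

theorem isFeasible_const_card (hG : G.Connected) : IsFeasible G K fun _ => (#K : ℝ) := by
  refine ⟨fun _ => Nat.cast_nonneg _, fun C ⟨⟨u, hu⟩, hC⟩ => ?_⟩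
  obtain ⟨v, hv⟩ := not_forall.mp (mt eq_univ_iff_forall.mpr hC)
  obtain ⟨d, -, hdC, hdC'⟩ := (hG.preconnected u v).some.exists_boundary_dart (C : Set V) hu hv
  have hd : d.edge ∈ cutEdges G C :=
    mem_filter.mpr ⟨G.mem_edgeFinset.mpr d.edge_mem, ⟨d.fst, d.snd, rfl, hdC, hdC'⟩⟩
  calc (min #(K ∩ C) #(K \ C) : ℝ) ≤ #(K ∩ C) := min_le_left _ _
    _ ≤ #K := mod_cast card_le_card inter_subset_left
    _ ≤ ∑ e ∈ cutEdges G C, (#K : ℝ) := single_le_sum (fun _ _ => Nat.cast_nonneg _) hd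

theorem card_inter_mul_card_sdiff_le (hx : IsFeasible G K x) (C : Finset V) :
    (#(K ∩ C) * #(K \ C) : ℝ) ≤ #K * ∑ e ∈ cutEdges G C, x e := by
  by_cases hC : IsCut C
  · have hmin := hx.2 C hC
    have hsum : (#(K ∩ C) : ℝ) + #(K \ C) = #K := mod_cast card_inter_add_card_sdiff K C
    rw [← hsum]
    refine le_trans ?_ (mul_le_mul_of_nonneg_left hmin (by positivity))
    rcases min_cases (#(K ∩ C) : ℝ) #(K \ C) with ⟨h, _⟩ | ⟨h, _⟩ <;> rw [h] <;> nlinarith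
  · have hzero : #(K ∩ C) * #(K \ C) = 0 := by
      rcases not_and_or.mp hC with h | h
      · simp [not_nonempty_iff_eq_empty.mp h]
      · simp [not_not.mp h]
    rw [← Nat.cast_mul, hzero, Nat.cast_zero]
    exact mul_nonneg (Nat.cast_nonneg _) (sum_nonneg fun e _ => hx.1 e)

theorem sum_sum_cutEdges_sublevel_le {f : V → ℕ} (hf : ∀ a b, G.Adj a b → f a ≤ f b + 1)
    (hx0 : ∀ e, 0 ≤ x e) (M : ℕ) :
    ∑ r ∈ range M, ∑ e ∈ cutEdges G {v | f v ≤ r}, x e ≤ ∑ e ∈ G.edgeFinset, x e := by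
  have hdisj : (range M : Set ℕ).PairwiseDisjoint fun r => cutEdges G {v | f v ≤ r} :=
    fun r _ r' _ hne => Finset.disjoint_left.mpr fun e he he' =>
      hne (eq_of_crosses_sublevel hf (G.mem_edgeFinset.mp (mem_filter.mp he).1)
        (mem_filter.mp he).2 (mem_filter.mp he').2)
  rw [← sum_biUnion hdisj]
  exact sum_le_sum_of_subset_of_nonneg (biUnion_subset.mpr fun r _ => filter_subset _ _)
    fun e _ _ => hx0 e

theorem sum_sum_tsub_le_of_isFeasible {f : V → ℕ} (hf : ∀ a b, G.Adj a b → f a ≤ f b + 1)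
    (hx : IsFeasible G K x) :
    ∑ u ∈ K, ∑ w ∈ K, ((f w - f u : ℕ) : ℝ) ≤ #K * ∑ e ∈ G.edgeFinset, x e := by
  set M := K.sup f + 1
  have hlayer := sum_sum_tsub_eq_sum_card_mul_card K f (M := M) fun w hw =>
    Nat.lt_succ_of_le (le_sup hw)
  have hcut : ∀ r, (#{u ∈ K | f u ≤ r} * #{w ∈ K | r < f w} : ℝ)
      ≤ #K * ∑ e ∈ cutEdges G {v | f v ≤ r}, x e := fun r => by
    convert card_inter_mul_card_sdiff_le hx {v | f v ≤ r} using 4 <;> ext <;> simp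
  calc ∑ u ∈ K, ∑ w ∈ K, ((f w - f u : ℕ) : ℝ)
      = ∑ r ∈ range M, (#{u ∈ K | f u ≤ r} * #{w ∈ K | r < f w} : ℝ) := mod_cast hlayer
    _ ≤ #K * ∑ r ∈ range M, ∑ e ∈ cutEdges G {v | f v ≤ r}, x e := by
      rw [mul_sum]
      exact sum_le_sum fun r _ => hcut r
    _ ≤ #K * ∑ e ∈ G.edgeFinset, x e :=
      mul_le_mul_of_nonneg_left (sum_sum_cutEdges_sublevel_le hf hx.1 M) (Nat.cast_nonneg _)

theorem sum_sum_abs_sub_le_of_isFeasible {f : V → ℕ} (hf : ∀ a b, G.Adj a b → f a ≤ f b + 1)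
    (hx : IsFeasible G K x) :
    ∑ u ∈ K, ∑ w ∈ K, |(f u : ℝ) - f w| ≤ 2 * #K * ∑ e ∈ G.edgeFinset, x e := by
  have h := sum_sum_tsub_le_of_isFeasible hf hx
  have hswap : ∑ u ∈ K, ∑ w ∈ K, ((f u - f w : ℕ) : ℝ) =
      ∑ u ∈ K, ∑ w ∈ K, ((f w - f u : ℕ) : ℝ) := sum_comm
  simp only [abs_natCast_sub_natCast, sum_add_distrib, hswap]
  linarith

theorem sum_sum_expectedGap_le (hG : G.Connected) (hx : IsFeasible G K x) {p : ℝ}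
    (hp0 : 0 ≤ p) (hp1 : p ≤ 1) :
    ∑ u ∈ K, ∑ w ∈ K, G.expectedGap K p u w ≤ 2 * #K * ∑ e ∈ G.edgeFinset, x e := by
  have hT : ∀ T : Finset V, ∑ u ∈ K, ∑ w ∈ K, |(G.distToFinset T u : ℝ) - G.distToFinset T w|
      ≤ 2 * #K * ∑ e ∈ G.edgeFinset, x e := fun T =>
    sum_sum_abs_sub_le_of_isFeasible (fun a b hab => G.distToFinset_le_of_adj hG T hab) hx
  calc ∑ u ∈ K, ∑ w ∈ K, G.expectedGap K p u w
      = ∑ T ∈ K.powerset, subsetWeight p K T *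
          ∑ u ∈ K, ∑ w ∈ K, |(G.distToFinset T u : ℝ) - G.distToFinset T w| := by
        simp only [expectedGap, mul_sum]
        exact (sum_congr rfl fun u _ => sum_comm).trans sum_comm
    _ ≤ ∑ T ∈ K.powerset, subsetWeight p K T * (2 * #K * ∑ e ∈ G.edgeFinset, x e) :=
      sum_le_sum fun T _ => mul_le_mul_of_nonneg_left (hT T) (subsetWeight_nonneg hp0 hp1 K T)
    _ = 2 * #K * ∑ e ∈ G.edgeFinset, x e := by
      rw [← sum_mul, sum_subsetWeight_powerset, one_mul]

theorem sum_sum_dist_le (hG : G.Connected) (hx : IsFeasible G K x) {J : ℕ}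
    (hJ : #K ≤ 2 ^ J) :
    ∑ u ∈ K, ∑ w ∈ K, (G.dist u w : ℝ) ≤ 48 * J * #K * ∑ e ∈ G.edgeFinset, x e := by
  calc ∑ u ∈ K, ∑ w ∈ K, (G.dist u w : ℝ)
      ≤ ∑ u ∈ K, ∑ w ∈ K,
          24 * ∑ j ∈ range J, G.expectedGap K (1 / (2 * (2 ^ j : ℕ))) u w :=
      sum_le_sum fun u hu => sum_le_sum fun w hw => G.dist_le_sum_expectedGap hG hu hw hJ
    _ = 24 * ∑ j ∈ range J, ∑ u ∈ K, ∑ w ∈ K,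
          G.expectedGap K (1 / (2 * (2 ^ j : ℕ))) u w := by
      simp only [mul_sum]
      exact (sum_congr rfl fun u _ => sum_comm).trans sum_comm
    _ ≤ 24 * ∑ j ∈ range J, 2 * #K * ∑ e ∈ G.edgeFinset, x e := by
      gcongr with j
      exact sum_sum_expectedGap_le hG hx (by positivity)
        (one_div_two_mul_natCast_le_one (Nat.two_pow_pos j))
    _ = 48 * J * #K * ∑ e ∈ G.edgeFinset, x e := by
      rw [sum_const, card_range, nsmul_eq_mul]
      ring

theorem sigmaK_le_of_isFeasible (hG : G.Connected) (hK : 2 ≤ #K) (hx : IsFeasible G K x) :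
    (sigmaK G K : ℝ) ≤ 96 * Real.logb 2 #K * ∑ e ∈ G.edgeFinset, x e := by
  set J := Nat.log 2 #K + 1
  have hJ : #K ≤ 2 ^ J := (Nat.lt_pow_succ_log_self one_lt_two _).le
  have hlog : 1 ≤ Real.logb 2 #K := by
    rw [Real.le_logb_iff_rpow_le one_lt_two (by positivity)]
    simpa using (mod_cast hK : (2 : ℝ) ≤ #K)
  have hJlog : (J : ℝ) ≤ 2 * Real.logb 2 #K := by
    have := Real.natLog_le_logb #K 2
    push_cast [J] at this ⊢
    linarith
  have hX : 0 ≤ ∑ e ∈ G.edgeFinset, x e := sum_nonneg fun e _ => hx.1 e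
  have hk : (0 : ℝ) < #K := by positivity
  have hsum := (card_mul_sigmaK_le G K).trans (sum_sum_dist_le hG hx hJ)
  calc (sigmaK G K : ℝ) ≤ 48 * J * ∑ e ∈ G.edgeFinset, x e :=
        le_of_mul_le_mul_left (by linarith) hk
    _ ≤ 96 * Real.logb 2 #K * ∑ e ∈ G.edgeFinset, x e := by
        nlinarith [mul_le_mul_of_nonneg_right hJlog hX]

/-- There is an absolute constant `c > 0` such that for every finite connected
simple graph `G` and every `K ⊆ V` with `|K| = k ≥ 2`,
`LP_MDN(G,K) ≥ c · σ_K(G) / log₂ k`. -/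
theorem statement7 :
    ∃ c : ℝ, 0 < c ∧
      ∀ (V : Type) [Fintype V] [DecidableEq V] (G : SimpleGraph V),
        G.Connected →
        ∀ K : Finset V, 2 ≤ K.card →
          c * (sigmaK G K : ℝ) / Real.logb 2 (K.card : ℝ) ≤ LPMDN G K := by
  refine ⟨1 / 96, by norm_num, fun V _ _ G hG K hK => ?_⟩
  have hlog : 0 < Real.logb 2 #K := Real.logb_pos one_lt_two (mod_cast hK)
  obtain ⟨hx0, hxC⟩ := isFeasible_const_card (K := K) hG
  refine le_csInf ⟨_, _, hx0, hxC, rfl⟩ ?_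
  rintro _ ⟨x, hx0, hxC, rfl⟩
  rw [div_le_iff₀ hlog]
  linarith [sigmaK_le_of_isFeasible hG hK ⟨hx0, hxC⟩]
end

section
/- Let G = (V,E) be a finite connected simple graph and let K ⊆ V be a set of terminals of even size. Then (1/2) · σ_K(G) ≤ max_{M∈𝓜(K)} d(G,M) ≤ σ_K(G), where 𝓜(K) denotes the set of all perfect matchings of K. -/
open Finset
open scoped Classical

variable {V : Type} [Fintype V] [DecidableEq V]

/-- `M` is a perfect matching of `K`: a collection of disjoint unordered pairs of distinct
vertices partitioning `K`. -/
def IsPerfectMatchingOn (K : Finset V) (M : Finset (Sym2 V)) : Prop :=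
  (∀ p ∈ M, ¬ p.IsDiag) ∧
  (∀ v ∈ K, ∃! p, p ∈ M ∧ v ∈ p) ∧
  (∀ p ∈ M, ∀ v ∈ p, v ∈ K)

/-- `d(G,M) = ∑_{{u,v}∈M} d_G(u,v)`. -/
noncomputable def matchCost (G : SimpleGraph V) (M : Finset (Sym2 V)) : ℕ :=
  ∑ p ∈ M, Sym2.lift ⟨fun u v => G.dist u v, fun _ _ => SimpleGraph.dist_comm⟩ p

-- my helpers
noncomputable def pairF : Sym2 V → Finset V :=
  Sym2.lift ⟨fun u v => {u, v}, fun u v => Finset.pair_comm u v⟩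

lemma mem_pairF {z : V} {p : Sym2 V} : z ∈ pairF p ↔ z ∈ p := by
  induction p using Sym2.ind with
  | _ u v => simp [pairF, Sym2.mem_iff]

lemma matching_sum (K : Finset V) (M : Finset (Sym2 V)) (hM : IsPerfectMatchingOn K M)
    (t : V → ℕ) : ∑ z ∈ K, t z = ∑ p ∈ M, ∑ z ∈ pairF p, t z := by
  obtain ⟨hdiag, huniq, hmem⟩ := hM
  have hU : M.biUnion pairF = K := by
    ext z
    simp only [Finset.mem_biUnion]
    constructor
    · rintro ⟨p, hp, hz⟩; exact hmem p hp z (mem_pairF.1 hz)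
    · intro hz
      obtain ⟨p, ⟨hp, hzp⟩, _⟩ := huniq z hz
      exact ⟨p, hp, mem_pairF.2 hzp⟩
  rw [← hU, Finset.sum_biUnion]
  intro p hp q hq hpq
  simp only [Finset.disjoint_left]
  intro z hzp hzq
  have hzK : z ∈ K := hmem p hp z (mem_pairF.1 hzp)
  obtain ⟨p0, _, hun⟩ := huniq z hzK
  exact hpq ((hun p ⟨hp, mem_pairF.1 hzp⟩).trans (hun q ⟨hq, mem_pairF.1 hzq⟩).symm)

lemma exists_involution : ∀ n : ℕ, ∀ K : Finset V, K.card = 2 * n →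
    ∃ m : V → V, ∀ x ∈ K, m x ∈ K ∧ m (m x) = x ∧ m x ≠ x := by
  intro n
  induction n with
  | zero =>
    intro K hK
    refine ⟨id, fun x hx => absurd hK ?_⟩
    have : 0 < K.card := Finset.card_pos.2 ⟨x, hx⟩
    omega
  | succ n ih =>
    intro K hK
    obtain ⟨a, ha⟩ := Finset.card_pos.1 (by omega : 0 < K.card)
    obtain ⟨b, hb⟩ := Finset.card_pos.1
      (by rw [Finset.card_erase_of_mem ha]; omega : 0 < (K.erase a).card)
    have hba : b ≠ a := Finset.ne_of_mem_erase hb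
    have hbK : b ∈ K := Finset.mem_of_mem_erase hb
    obtain ⟨m', hm'⟩ := ih ((K.erase a).erase b)
      (by rw [Finset.card_erase_of_mem hb, Finset.card_erase_of_mem ha]; omega)
    refine ⟨fun x => if x = a then b else if x = b then a else m' x, ?_⟩
    intro x hx
    by_cases hxa : x = a
    · subst hxa
      simp [hba, hbK, ha, Ne.symm hba]
    · by_cases hxb : x = b
      · subst hxb
        simp [hba, ha, hbK, Ne.symm hba]
      · have hxK' : x ∈ (K.erase a).erase b := by
          simp [Finset.mem_erase, hxa, hxb, hx]
        obtain ⟨h1', h2', h3'⟩ := hm' x hxK'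
        have hma : m' x ≠ a := Finset.ne_of_mem_erase (Finset.mem_of_mem_erase h1')
        have hmb : m' x ≠ b := Finset.ne_of_mem_erase h1'
        simp only [if_neg hxa, if_neg hxb, if_neg hma, if_neg hmb, h2']
        exact ⟨Finset.mem_of_mem_erase (Finset.mem_of_mem_erase h1'), by simp [hxa, hxb], h3'⟩


lemma exchange (G : SimpleGraph V) (K : Finset V) (m : V → V)
    (hm : ∀ x ∈ K, m x ∈ K ∧ m (m x) = x ∧ m x ≠ x)
    (hmax : ∀ m' : V → V, (∀ x ∈ K, m' x ∈ K ∧ m' (m' x) = x ∧ m' x ≠ x) →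
      ∑ z ∈ K, G.dist z (m' z) ≤ ∑ z ∈ K, G.dist z (m z))
    {x y : V} (hx : x ∈ K) (hy : y ∈ K) :
    G.dist x y + G.dist (m x) (m y) ≤ G.dist x (m x) + G.dist y (m y) := by
  obtain ⟨hbK, hbb, hbx⟩ := hm x hx
  obtain ⟨hdK, hdd, hdy⟩ := hm y hy
  by_cases hyx : y = x
  · subst hyx
    simp [SimpleGraph.dist_self]
  by_cases hymx : y = m x
  · subst hymx
    rw [hbb]
  -- main case: x, y, m x, m y are pairwise distinct
  have h1 : x ≠ y := fun h => hyx h.symm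
  have h2 : x ≠ m x := Ne.symm hbx
  have h3 : x ≠ m y := by intro h; apply hymx; rw [h, hdd]
  have h4 : y ≠ m x := hymx
  have h5 : y ≠ m y := Ne.symm hdy
  have h6 : m x ≠ m y := by intro h; apply h1; rw [← hbb, h, hdd]
  set f : V → V := fun z => if z = x then y else if z = y then x
    else if z = m x then m y else if z = m y then m x else m z with hf
  have fx : f x = y := by simp [hf, h1, h2, h3]
  have fy : f y = x := by simp [hf, hyx]
  have fmx : f (m x) = m y := by simp [hf, hbx, Ne.symm h4]
  have fmy : f (m y) = m x := by simp [hf, Ne.symm h3, hdy, Ne.symm h6]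
  have felse : ∀ z, z ≠ x → z ≠ y → z ≠ m x → z ≠ m y → f z = m z := by
    intro z e1 e2 e3 e4; simp [hf, e1, e2, e3, e4]
  have hfinv : ∀ z ∈ K, f z ∈ K ∧ f (f z) = z ∧ f z ≠ z := by
    intro z hz
    by_cases e1 : z = x
    · subst e1; rw [fx, fy]; exact ⟨hy, rfl, Ne.symm h1⟩
    by_cases e2 : z = y
    · subst e2; rw [fy, fx]; exact ⟨hx, rfl, h1⟩
    by_cases e3 : z = m x
    · subst e3; rw [fmx, fmy]; exact ⟨hdK, rfl, Ne.symm h6⟩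
    by_cases e4 : z = m y
    · subst e4; rw [fmy, fmx]; exact ⟨hbK, rfl, h6⟩
    obtain ⟨hzK, hzz, hzne⟩ := hm z hz
    have g1 : m z ≠ x := by intro h; apply e3; rw [← hzz, h]
    have g2 : m z ≠ y := by intro h; apply e4; rw [← hzz, h]
    have g3 : m z ≠ m x := by intro h; apply e1; rw [← hzz, h, hbb]
    have g4 : m z ≠ m y := by intro h; apply e2; rw [← hzz, h, hdd]
    rw [felse z e1 e2 e3 e4, felse (m z) g1 g2 g3 g4]
    exact ⟨hzK, hzz, hzne⟩
  have hle := hmax f hfinv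
  set s4 : Finset V := {x, y, m x, m y} with hs4
  have hsub : s4 ⊆ K := by
    intro z hz
    simp only [hs4, Finset.mem_insert, Finset.mem_singleton] at hz
    rcases hz with rfl | rfl | rfl | rfl <;> assumption
  rw [← Finset.sum_sdiff hsub (f := fun z => G.dist z (f z)),
      ← Finset.sum_sdiff hsub (f := fun z => G.dist z (m z))] at hle
  have hR : ∑ z ∈ K \ s4, G.dist z (f z) = ∑ z ∈ K \ s4, G.dist z (m z) := by
    refine Finset.sum_congr rfl fun z hz => ?_
    simp only [Finset.mem_sdiff, hs4, Finset.mem_insert, Finset.mem_singleton, not_or] at hz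
    obtain ⟨_, e1, e2, e3, e4⟩ := hz
    rw [felse z e1 e2 e3 e4]
  rw [hR] at hle
  have hle2 : ∑ z ∈ s4, G.dist z (f z) ≤ ∑ z ∈ s4, G.dist z (m z) := by omega
  have nm1 : x ∉ ({y, m x, m y} : Finset V) := by simp [h1, h2, h3]
  have nm2 : y ∉ ({m x, m y} : Finset V) := by simp [h4, h5]
  have e1 : ∑ z ∈ s4, G.dist z (m z)
      = G.dist x (m x) + (G.dist y (m y) + (G.dist (m x) x + G.dist (m y) y)) := by
    rw [hs4, Finset.sum_insert nm1, Finset.sum_insert nm2, Finset.sum_pair h6, hbb, hdd]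
  have e2 : ∑ z ∈ s4, G.dist z (f z)
      = G.dist x y + (G.dist y x + (G.dist (m x) (m y) + G.dist (m y) (m x))) := by
    rw [hs4, Finset.sum_insert nm1, Finset.sum_insert nm2, Finset.sum_pair h6, fx, fy, fmx, fmy]
  rw [e1, e2] at hle2
  have c1 : G.dist y x = G.dist x y := SimpleGraph.dist_comm
  have c2 : G.dist (m y) (m x) = G.dist (m x) (m y) := SimpleGraph.dist_comm
  have c3 : G.dist (m x) x = G.dist x (m x) := SimpleGraph.dist_comm
  have c4 : G.dist (m y) y = G.dist y (m y) := SimpleGraph.dist_comm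
  omega


lemma inv_bound (G : SimpleGraph V) (K : Finset V) (hne : K.Nonempty) (hK : Even K.card) :
    ∃ m : V → V, (∀ x ∈ K, m x ∈ K ∧ m (m x) = x ∧ m x ≠ x) ∧
      sigmaK G K ≤ ∑ x ∈ K, G.dist x (m x) := by
  obtain ⟨r, hr⟩ := hK
  obtain ⟨m0, hm0⟩ := exists_involution r K (by omega)
  set S : Finset (V → V) :=
    Finset.univ.filter (fun m : V → V => ∀ x ∈ K, m x ∈ K ∧ m (m x) = x ∧ m x ≠ x) with hS
  have hSne : S.Nonempty :=
    ⟨m0, by simp only [hS, Finset.mem_filter, Finset.mem_univ, true_and]; exact hm0⟩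
  obtain ⟨m, hmS, hmax⟩ := Finset.exists_max_image S (fun m => ∑ x ∈ K, G.dist x (m x)) hSne
  have hm : ∀ x ∈ K, m x ∈ K ∧ m (m x) = x ∧ m x ≠ x := by
    simpa only [hS, Finset.mem_filter, Finset.mem_univ, true_and] using hmS
  have hmax' : ∀ m' : V → V, (∀ x ∈ K, m' x ∈ K ∧ m' (m' x) = x ∧ m' x ≠ x) →
      ∑ z ∈ K, G.dist z (m' z) ≤ ∑ z ∈ K, G.dist z (m z) := by
    intro m' hm'; exact hmax m' (by simp only [hS, Finset.mem_filter, Finset.mem_univ, true_and]; exact hm')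
  refine ⟨m, hm, ?_⟩
  have key : ∀ x ∈ K, ∀ y ∈ K,
      G.dist x y + G.dist (m x) (m y) ≤ G.dist x (m x) + G.dist y (m y) :=
    fun x hx y hy => exchange G K m hm hmax' hx hy
  have hre : ∀ g : V → ℕ, ∑ y ∈ K, g (m y) = ∑ y ∈ K, g y := by
    intro g
    exact Finset.sum_nbij' (fun y => m y) (fun y => m y)
      (fun a ha => (hm a ha).1) (fun a ha => (hm a ha).1)
      (fun a ha => (hm a ha).2.1) (fun a ha => (hm a ha).2.1)
      (fun a _ => rfl)
  set F := ∑ x ∈ K, G.dist x (m x) with hF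
  set T := ∑ x ∈ K, ∑ y ∈ K, G.dist x y with hT
  have hTm : ∑ x ∈ K, ∑ y ∈ K, G.dist (m x) (m y) = T := by
    have inner : ∀ x, ∑ y ∈ K, G.dist (m x) (m y) = ∑ y ∈ K, G.dist (m x) y :=
      fun x => hre (fun y => G.dist (m x) y)
    calc ∑ x ∈ K, ∑ y ∈ K, G.dist (m x) (m y)
        = ∑ x ∈ K, ∑ y ∈ K, G.dist (m x) y := Finset.sum_congr rfl fun x _ => inner x
      _ = ∑ x ∈ K, ∑ y ∈ K, G.dist x y := hre (fun x => ∑ y ∈ K, G.dist x y)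
      _ = T := rfl
  have hsum : T + T ≤ K.card * F + K.card * F := by
    have h1 : ∑ x ∈ K, ∑ y ∈ K, (G.dist x y + G.dist (m x) (m y))
        ≤ ∑ x ∈ K, ∑ y ∈ K, (G.dist x (m x) + G.dist y (m y)) :=
      Finset.sum_le_sum fun x hx => Finset.sum_le_sum fun y hy => key x hx y hy
    have h2 : ∑ x ∈ K, ∑ y ∈ K, (G.dist x y + G.dist (m x) (m y))
        = T + ∑ x ∈ K, ∑ y ∈ K, G.dist (m x) (m y) := by
      rw [hT, ← Finset.sum_add_distrib]
      exact Finset.sum_congr rfl fun x _ => Finset.sum_add_distrib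
    have h3 : ∑ x ∈ K, ∑ y ∈ K, (G.dist x (m x) + G.dist y (m y))
        = K.card * F + K.card * F := by
      have : ∀ x ∈ K, ∑ y ∈ K, (G.dist x (m x) + G.dist y (m y))
          = K.card * G.dist x (m x) + F := by
        intro x _
        rw [Finset.sum_add_distrib, Finset.sum_const, smul_eq_mul]
      rw [Finset.sum_congr rfl this, Finset.sum_add_distrib, Finset.sum_const, smul_eq_mul,
        ← Finset.mul_sum, ← hF]
    omega
  have hTlow : K.card * sigmaK G K ≤ T := by
    rw [hT]
    calc K.card * sigmaK G K = ∑ _x ∈ K, sigmaK G K := by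
          rw [Finset.sum_const, smul_eq_mul]
      _ ≤ ∑ x ∈ K, ∑ y ∈ K, G.dist x y :=
          Finset.sum_le_sum fun x _ => Nat.sInf_le ⟨x, rfl⟩
  have hcard : 0 < K.card := Finset.card_pos.2 hne
  have : K.card * sigmaK G K ≤ K.card * F := by omega
  exact Nat.le_of_mul_le_mul_left this hcard


lemma pairF_mk (u v : V) : pairF s(u, v) = {u, v} := rfl

lemma liftd_mk (G : SimpleGraph V) (u v : V) :
    Sym2.lift ⟨fun u v => G.dist u v, fun _ _ => SimpleGraph.dist_comm⟩ s(u, v)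
      = G.dist u v := rfl

/-- For a finite connected simple graph `G` and terminals `K` of even size,
`(1/2)·σ_K(G) ≤ max_{M∈𝓜(K)} d(G,M) ≤ σ_K(G)` : some perfect matching of `K` attains at least
`σ_K(G)/2`, and every perfect matching of `K` has cost at most `σ_K(G)`. -/
theorem statement9 (V : Type) [Fintype V] [DecidableEq V] (G : SimpleGraph V)
    (hG : G.Connected) (K : Finset V) (hK : Even K.card) :
    (∃ M : Finset (Sym2 V), IsPerfectMatchingOn K M ∧
      (sigmaK G K : ℝ) / 2 ≤ (matchCost G M : ℝ)) ∧
    (∀ M : Finset (Sym2 V), IsPerfectMatchingOn K M → matchCost G M ≤ sigmaK G K) := by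
  have hVne : Nonempty V := hG.nonempty
  constructor
  · by_cases hKe : K = ∅
    · subst hKe
      refine ⟨∅, ⟨by simp, by simp, by simp⟩, ?_⟩
      obtain ⟨v⟩ := hVne
      have hs : sigmaK G (∅ : Finset V) = 0 :=
        Nat.le_zero.1 (Nat.sInf_le ⟨v, by simp⟩)
      simp [matchCost, hs]
    · obtain ⟨m, hm, hbound⟩ := inv_bound G K (Finset.nonempty_of_ne_empty hKe) hK
      set M : Finset (Sym2 V) := K.image (fun x => s(x, m x)) with hMdef
      have hPM : IsPerfectMatchingOn K M := by
        refine ⟨?_, ?_, ?_⟩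
        · intro p hp
          obtain ⟨x, hx, rfl⟩ := Finset.mem_image.1 hp
          rw [Sym2.mk_isDiag_iff]
          exact Ne.symm (hm x hx).2.2
        · intro v hv
          refine ⟨s(v, m v), ⟨Finset.mem_image_of_mem _ hv, by simp⟩, ?_⟩
          rintro q ⟨hq, hvq⟩
          obtain ⟨x, hx, rfl⟩ := Finset.mem_image.1 hq
          rcases Sym2.mem_iff.1 hvq with rfl | rfl
          · rfl
          · rw [(hm x hx).2.1, Sym2.eq_swap]
        · intro p hp v hv
          obtain ⟨x, hx, rfl⟩ := Finset.mem_image.1 hp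
          rcases Sym2.mem_iff.1 hv with rfl | rfl
          · exact hx
          · exact (hm x hx).1
      have hcost : ∑ x ∈ K, G.dist x (m x) = 2 * matchCost G M := by
        rw [matching_sum K M hPM (fun z => G.dist z (m z)), matchCost, Finset.mul_sum]
        refine Finset.sum_congr rfl fun p hp => ?_
        obtain ⟨x, hx, rfl⟩ := Finset.mem_image.1 hp
        have hxmx : x ≠ m x := Ne.symm (hm x hx).2.2
        rw [pairF_mk, liftd_mk, Finset.sum_pair hxmx, (hm x hx).2.1]
        have hc : G.dist (m x) x = G.dist x (m x) := SimpleGraph.dist_comm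
        omega
      refine ⟨M, hPM, ?_⟩
      have hb2 : sigmaK G K ≤ 2 * matchCost G M := hcost ▸ hbound
      have hb3 : (sigmaK G K : ℝ) ≤ 2 * (matchCost G M : ℝ) := by exact_mod_cast hb2
      linarith
  · intro M hM
    have hSne : {n | ∃ v : V, n = ∑ w ∈ K, G.dist v w}.Nonempty := by
      obtain ⟨v⟩ := hVne; exact ⟨_, v, rfl⟩
    obtain ⟨v0, hv0⟩ := Nat.sInf_mem hSne
    have hσ : sigmaK G K = ∑ w ∈ K, G.dist v0 w := hv0
    calc matchCost G M ≤ ∑ p ∈ M, ∑ z ∈ pairF p, G.dist v0 z := by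
          refine Finset.sum_le_sum fun p hp => ?_
          have hd := hM.1 p hp
          revert hd
          induction p using Sym2.ind with
          | _ u v =>
            intro hd
            rw [Sym2.mk_isDiag_iff] at hd
            rw [liftd_mk, pairF_mk, Finset.sum_pair hd]
            calc G.dist u v ≤ G.dist u v0 + G.dist v0 v := hG.dist_triangle
              _ = G.dist v0 u + G.dist v0 v := by rw [SimpleGraph.dist_comm]
      _ = ∑ z ∈ K, G.dist v0 z := (matching_sum K M hM _).symm
      _ = sigmaK G K := hσ.symm
end
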